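/- arXiv:1205.1551 — 4 statements merged into one kernel-verified Lean document; each statement's English description precedes it below -/
import Mathlib

section
/- Let $\mu$ be a finite signed Borel measure on $\mathbb{R}^2$ and $p \in (1,\infty]$. Then $\limsup_{t \to 0^+} t^{1 - 1/p} \|e^{t\Delta}\mu\|_{L^p} \le C_p \|\mu\|_{pp}$, where $\|\mu\|_{pp} = \sum_{x : |\mu(\{x\})| > 0} |\mu(\{x\})|$ is the total variation of the atomic part of $\mu$, and $C_p$ depends only on $p$. -/
open MeasureTheory Real Filter
open scoped ENNReal Topology

noncomputable section

/-- The two-dimensional heat kernel. -/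
def heatK (t : ℝ) (x : EuclideanSpace ℝ (Fin 2)) : ℝ :=
  (4 * Real.pi * t)⁻¹ * Real.exp (-‖x‖ ^ 2 / (4 * t))

/-- The heat evolution of a finite signed Borel measure `μ` on `ℝ²`:
`(e^{tΔ}μ)(x) = ∫ K_t(x-y) dμ(y)`, written via the Jordan decomposition. -/
def heatEvol (μ : MeasureTheory.SignedMeasure (EuclideanSpace ℝ (Fin 2))) (t : ℝ)
    (x : EuclideanSpace ℝ (Fin 2)) : ℝ :=
  (∫ y, heatK t (x - y) ∂μ.toJordanDecomposition.posPart) -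
    ∫ y, heatK t (x - y) ∂μ.toJordanDecomposition.negPart

/-!
Since `|e^{tΔ}μ| ≤ e^{tΔ}|μ|`, split the total variation `|μ|` into its atomic and its atomless
part. If every closed `δ`-ball has `ν`-mass at most `ε`, then
`‖e^{tΔ}ν‖_∞ ≤ (4πt)⁻¹ (ε + e^{-δ²/4t} ν(ℝ²))` and `‖e^{tΔ}ν‖₁ = ν(ℝ²)`, so by interpolation
`t^{1-1/p} ‖e^{tΔ}ν‖_p ≤ ((ε + e^{-δ²/4t} ν(ℝ²)) / 4π)^{1-1/p} ν(ℝ²)^{1/p}`.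
A finite atomless measure on `ℝ²` has uniformly small balls (tightness plus a Lebesgue number),
so its contribution tends to `0` as `t → 0⁺`, while the atomic part contributes at most its mass
`∑ₓ |μ {x}|`. Hence `C_p = 1` works.
-/

open Metric Set

section GeneralMeasure

variable {X : Type*} [MeasurableSpace X]

theorem eLpNorm_le_rpow_mul_lintegral_rpow {E : Type*} [NormedAddCommGroup E] {μ : Measure X}
    {p : ℝ≥0∞} (hp : 1 ≤ p) {f : X → E} {A : ℝ≥0∞} (hA : A ≠ ∞) (hfA : ∀ x, ‖f x‖ₑ ≤ A) :
    eLpNorm f p μ ≤ A ^ (1 - 1 / p.toReal) * (∫⁻ x, ‖f x‖ₑ ∂μ) ^ (1 / p.toReal) := by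
  rcases eq_or_ne p ∞ with rfl | hp_top
  · simpa [eLpNorm_exponent_top] using eLpNormEssSup_le_of_ae_enorm_bound (ae_of_all _ hfA)
  set q := p.toReal
  have hq : 1 ≤ q := by simpa using ENNReal.toReal_mono hp_top hp
  have hpow : ∀ x, ‖f x‖ₑ ^ q ≤ A ^ (q - 1) * ‖f x‖ₑ := fun x =>
    calc ‖f x‖ₑ ^ q = ‖f x‖ₑ ^ (q - 1) * ‖f x‖ₑ ^ (1 : ℝ) := by
          rw [← ENNReal.rpow_add_of_nonneg _ _ (by linarith) zero_le_one, sub_add_cancel]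
      _ ≤ A ^ (q - 1) * ‖f x‖ₑ := by
          rw [ENNReal.rpow_one]; gcongr; exact hfA x
  calc eLpNorm f p μ = (∫⁻ x, ‖f x‖ₑ ^ q ∂μ) ^ (1 / q) :=
        eLpNorm_eq_lintegral_rpow_enorm_toReal (by positivity) hp_top
    _ ≤ (A ^ (q - 1) * ∫⁻ x, ‖f x‖ₑ ∂μ) ^ (1 / q) := by
        rw [← lintegral_const_mul' _ _ (ENNReal.rpow_ne_top_of_nonneg (by linarith) hA)]
        gcongr with x
        exact hpow x
    _ = A ^ (1 - 1 / q) * (∫⁻ x, ‖f x‖ₑ ∂μ) ^ (1 / q) := by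
        rw [ENNReal.mul_rpow_of_nonneg _ _ (by positivity), ← ENNReal.rpow_mul]
        congr 2
        field_simp

theorem exists_forall_measure_closedBall_le [MetricSpace X] [ProperSpace X] [BorelSpace X]
    (ν : Measure X) [IsFiniteMeasure ν] [NullSingletonClass ν] {e : ℝ≥0∞} (he : 0 < e) :
    ∃ δ > 0, ∀ x, ν (closedBall x δ) ≤ e := by
  obtain ⟨K, hK, hKe⟩ :=
    isTightMeasureSet_iff_exists_isCompact_measure_compl_le.1
      (isTightMeasureSet_singleton (μ := ν)) e he
  have hKe : ν Kᶜ ≤ e := hKe ν rfl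
  have hsmall : ∀ x, ∃ r > 0, ν (closedBall x r) ≤ e := fun x => by
    have h := tendsto_measure_cthickening_of_isClosed (μ := ν) ⟨1, one_pos, measure_ne_top ν _⟩
      (isClosed_singleton (x := x))
    rw [measure_singleton] at h
    obtain ⟨r, hre, hr⟩ := (((h.mono_left (nhdsWithin_le_nhds (s := Ioi 0))).eventually
      (eventually_le_nhds he)).and self_mem_nhdsWithin).exists
    exact ⟨r, hr, by rwa [← cthickening_singleton x (le_of_lt hr)]⟩
  choose r hr hre using hsmall
  obtain ⟨δ, hδ, hcover⟩ := lebesgue_number_lemma_of_metric hK (c := fun x => ball x (r x))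
    (fun x => isOpen_ball) (fun y _ => mem_iUnion.2 ⟨y, mem_ball_self (hr y)⟩)
  refine ⟨δ / 3, by positivity, fun z => ?_⟩
  by_cases hzK : ∃ y ∈ K, dist z y < δ / 2
  · obtain ⟨y, hyK, hzy⟩ := hzK
    obtain ⟨x, hx⟩ := hcover y hyK
    refine (measure_mono fun w hw => ball_subset_closedBall (hx ?_)).trans (hre x)
    rw [mem_closedBall] at hw
    rw [mem_ball]
    linarith [dist_triangle w z y]
  · push Not at hzK
    refine (measure_mono fun w hw hwK => ?_).trans hKe
    rw [mem_closedBall, dist_comm] at hw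
    linarith [hzK w hwK]

def MeasureTheory.Measure.atoms (ν : Measure X) : Set X := {x | ν {x} ≠ 0}

variable [MeasurableSingletonClass X]

namespace MeasureTheory.Measure

variable (ν : Measure X)

theorem countable_atoms [SFinite ν] : ν.atoms.Countable := by
  simpa [atoms, pos_iff_ne_zero] using countable_meas_pos_of_disjoint_iUnion
    (μ := ν) measurableSet_singleton fun x y hxy => disjoint_singleton.2 hxy

instance nullSingletonClass_restrict_compl_atoms : NullSingletonClass (ν.restrict ν.atomsᶜ) where
  measure_singleton x := by
    rw [restrict_apply (measurableSet_singleton x)]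
    by_cases hx : ν {x} = 0
    · exact measure_mono_null inter_subset_left hx
    · rw [singleton_inter_eq_empty.2 (by simpa [atoms] using hx), measure_empty]

theorem restrict_atoms_apply_univ [SFinite ν] : ν.restrict ν.atoms univ = ∑' x, ν {x} := by
  rw [restrict_apply_univ, ← tsum_subtype_eq_of_support_subset (s := ν.atoms) fun x hx => hx]
  simpa using (tsum_measure_preimage_singleton (μ := ν) ν.countable_atoms (f := id)
    fun y _ => measurableSet_singleton y).symm

end MeasureTheory.Measure

namespace MeasureTheory.SignedMeasure

variable (μ : SignedMeasure X)

theorem totalVariation_singleton (x : X) : μ.totalVariation {x} = ENNReal.ofReal |μ {x}| := by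
  obtain ⟨u, -, hu, hu'⟩ := μ.toJordanDecomposition.mutuallySingular
  rw [μ.apply_eq_posPart_real_sub_negPart_real (measurableSet_singleton x), totalVariation,
    Measure.add_apply]
  by_cases hx : x ∈ u
  · simp [measureReal_def, measure_mono_null (singleton_subset_iff.2 hx) hu]
  · simp [measureReal_def, measure_mono_null (singleton_subset_iff.2 (mem_compl hx)) hu']

theorem ofReal_tsum_abs_apply_singleton :
    ENNReal.ofReal (∑' x, |μ {x}|) = ∑' x, μ.totalVariation {x} := by
  have habs : ∀ x, |μ {x}| = (μ.totalVariation {x}).toReal := fun x => by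
    rw [μ.totalVariation_singleton, ENNReal.toReal_ofReal (abs_nonneg _)]
  rw [tsum_congr habs, ← ENNReal.tsum_toReal_eq fun x => measure_ne_top _ _,
    ENNReal.ofReal_toReal (by rw [← Measure.restrict_atoms_apply_univ]; exact measure_ne_top _ _)]

end MeasureTheory.SignedMeasure

end GeneralMeasure

local notation "ℝ²" => EuclideanSpace ℝ (Fin 2)

theorem continuous_heatK (t : ℝ) : Continuous (heatK t) := by
  unfold heatK; fun_prop

theorem heatK_nonneg {t : ℝ} (ht : 0 ≤ t) (x : ℝ²) : 0 ≤ heatK t x := by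
  unfold heatK; positivity

theorem heatK_le_of_le_norm {t δ : ℝ} (ht : 0 ≤ t) (hδ : 0 ≤ δ) {x : ℝ²} (hx : δ ≤ ‖x‖) :
    heatK t x ≤ (4 * π * t)⁻¹ * rexp (-δ ^ 2 / (4 * t)) := by
  unfold heatK
  gcongr

theorem heatK_le {t : ℝ} (ht : 0 ≤ t) (x : ℝ²) : heatK t x ≤ (4 * π * t)⁻¹ := by
  simpa using heatK_le_of_le_norm ht le_rfl (norm_nonneg x)

theorem heatK_eq_gaussian (t : ℝ) :
    heatK t = fun x : ℝ² => (4 * π * t)⁻¹ * rexp (-(4 * t)⁻¹ * ‖x‖ ^ 2) := by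
  ext x; unfold heatK; ring_nf

theorem integral_heatK {t : ℝ} (ht : 0 < t) : ∫ x, heatK t x = 1 := by
  rw [heatK_eq_gaussian, integral_const_mul,
    GaussianFourier.integral_rexp_neg_mul_sq_norm (V := ℝ²) (by positivity)]
  norm_num [finrank_euclideanSpace_fin]
  field_simp

theorem integrable_heatK {t : ℝ} (ht : 0 < t) : Integrable (heatK t) :=
  .of_integral_ne_zero (by rw [integral_heatK ht]; exact one_ne_zero)

theorem lintegral_heatK {t : ℝ} (ht : 0 < t) : ∫⁻ x, ENNReal.ofReal (heatK t x) = 1 := by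
  rw [← ofReal_integral_eq_lintegral_ofReal (integrable_heatK ht)
    (ae_of_all _ (heatK_nonneg ht.le)), integral_heatK ht, ENNReal.ofReal_one]

def heatFlow (ν : Measure ℝ²) (t : ℝ) (x : ℝ²) : ℝ := ∫ y, heatK t (x - y) ∂ν

section HeatFlow

variable {ν : Measure ℝ²} {t : ℝ}

theorem stronglyMeasurable_heatFlow (ν : Measure ℝ²) [SFinite ν] (t : ℝ) :
    StronglyMeasurable (heatFlow ν t) :=
  ((continuous_heatK t).comp (continuous_fst.sub continuous_snd)).stronglyMeasurable
    |>.integral_prod_right'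

theorem heatFlow_nonneg (ht : 0 ≤ t) (x : ℝ²) : 0 ≤ heatFlow ν t x :=
  integral_nonneg fun _ => heatK_nonneg ht _

theorem integrable_heatK_sub [IsFiniteMeasure ν] (ht : 0 ≤ t) (x : ℝ²) :
    Integrable (fun y => heatK t (x - y)) ν :=
  (integrable_const (4 * π * t)⁻¹).mono'
    ((continuous_heatK t).comp (continuous_sub_left x)).aestronglyMeasurable
    (ae_of_all _ fun y => by rw [norm_of_nonneg (heatK_nonneg ht _)]; exact heatK_le ht _)

theorem heatFlow_add {ν₁ ν₂ : Measure ℝ²} [IsFiniteMeasure ν₁] [IsFiniteMeasure ν₂] (ht : 0 ≤ t) :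
    heatFlow (ν₁ + ν₂) t = heatFlow ν₁ t + heatFlow ν₂ t := by
  ext x
  exact integral_add_measure (integrable_heatK_sub ht x) (integrable_heatK_sub ht x)

theorem abs_heatEvol_le (μ : SignedMeasure ℝ²) (ht : 0 ≤ t) (x : ℝ²) :
    |heatEvol μ t x| ≤ heatFlow μ.totalVariation t x := by
  rw [SignedMeasure.totalVariation, heatFlow_add ht, Pi.add_apply]
  exact (abs_sub _ _).trans_eq <| by
    congr 1 <;> exact abs_of_nonneg (heatFlow_nonneg ht x)

theorem heatFlow_le [IsFiniteMeasure ν] (ht : 0 ≤ t) {δ ε : ℝ} (hδ : 0 ≤ δ)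
    (hball : ∀ x, ν.real (closedBall x δ) ≤ ε) (x : ℝ²) :
    heatFlow ν t x ≤ (4 * π * t)⁻¹ * (ε + rexp (-δ ^ 2 / (4 * t)) * ν.real univ) := by
  have hset : ∀ s C, (∀ y ∈ s, heatK t (x - y) ≤ C) → ∫ y in s, heatK t (x - y) ∂ν ≤ C * ν.real s :=
    fun s C hC => (le_abs_self _).trans <| norm_setIntegral_le_of_norm_le_const (measure_lt_top ν s)
      fun y hy => (norm_of_nonneg (heatK_nonneg ht _)).trans_le (hC y hy)
  have hnear := hset (closedBall x δ) _ fun y _ => heatK_le ht (x - y)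
  have hfar := hset (closedBall x δ)ᶜ _ fun y hy => heatK_le_of_le_norm ht hδ (by
    rw [mem_compl_iff, mem_closedBall, not_le, dist_eq_norm'] at hy; exact hy.le)
  rw [heatFlow, ← integral_add_compl measurableSet_closedBall (integrable_heatK_sub ht x)]
  calc _ ≤ _ := add_le_add hnear hfar
    _ ≤ (4 * π * t)⁻¹ * ε + (4 * π * t)⁻¹ * rexp (-δ ^ 2 / (4 * t)) * ν.real univ := by
        gcongr
        exacts [hball x, measure_ne_top ν _, subset_univ _]
    _ = _ := by ring

theorem lintegral_ofReal_heatFlow [IsFiniteMeasure ν] (ht : 0 < t) :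
    ∫⁻ x, ENNReal.ofReal (heatFlow ν t x) = ν univ := by
  have hmeas : AEMeasurable (Function.uncurry fun x y : ℝ² => ENNReal.ofReal (heatK t (x - y)))
      (volume.prod ν) :=
    (ENNReal.measurable_ofReal.comp
      ((continuous_heatK t).comp (continuous_fst.sub continuous_snd)).measurable).aemeasurable
  calc ∫⁻ x, ENNReal.ofReal (heatFlow ν t x)
      = ∫⁻ x, ∫⁻ y, ENNReal.ofReal (heatK t (x - y)) ∂ν := by
        refine lintegral_congr fun x => ?_
        exact ofReal_integral_eq_lintegral_ofReal (integrable_heatK_sub ht.le x)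
          (ae_of_all _ fun _ => heatK_nonneg ht.le _)
    _ = ∫⁻ y, ∫⁻ x, ENNReal.ofReal (heatK t (x - y)) ∂volume ∂ν := lintegral_lintegral_swap hmeas
    _ = ν univ := by
        simp only [lintegral_sub_right_eq_self fun x => ENNReal.ofReal (heatK t x),
          lintegral_heatK ht, lintegral_one]

end HeatFlow

theorem one_sub_one_div_toReal_nonneg {p : ℝ≥0∞} (hp : 1 ≤ p) : 0 ≤ 1 - 1 / p.toReal := by
  rcases eq_or_ne p ∞ with rfl | hp_top
  · norm_num
  · have : 1 ≤ p.toReal := by simpa using ENNReal.toReal_mono hp_top hp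
    rw [sub_nonneg, div_le_one (by linarith)]
    exact this

theorem one_sub_one_div_toReal_pos {p : ℝ≥0∞} (hp : 1 < p) : 0 < 1 - 1 / p.toReal := by
  rcases eq_or_ne p ∞ with rfl | hp_top
  · norm_num
  · have : 1 < p.toReal := by simpa using ENNReal.toReal_strict_mono hp_top hp
    rw [sub_pos, div_lt_one (by linarith)]
    exact this

theorem continuous_ofReal_rpow_mul_const {α : ℝ} {C : ℝ≥0∞} (hC : C ≠ ∞) :
    Continuous fun s : ℝ => ENNReal.ofReal s ^ α * C :=
  (ENNReal.continuous_mul_const hC).comp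
    (ENNReal.continuous_rpow_const.comp ENNReal.continuous_ofReal)

theorem tendsto_exp_neg_sq_div_nhdsGT_zero {δ : ℝ} (hδ : δ ≠ 0) :
    Tendsto (fun t : ℝ => rexp (-δ ^ 2 / (4 * t))) (𝓝[>] 0) (𝓝 0) := by
  have h : Tendsto (fun t : ℝ => -δ ^ 2 / 4 * t⁻¹) (𝓝[>] 0) atBot :=
    tendsto_inv_nhdsGT_zero.const_mul_atTop_of_neg (by have := sq_pos_of_ne_zero hδ; linarith)
  exact tendsto_exp_atBot.comp (h.congr fun t => by ring)

def scaledHeatFlowNorm (p : ℝ≥0∞) (ν : Measure ℝ²) (t : ℝ) : ℝ≥0∞ :=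
  ENNReal.ofReal (t ^ (1 - 1 / p.toReal)) * eLpNorm (heatFlow ν t) p volume

section ScaledNorm

variable {p : ℝ≥0∞} {ν : Measure ℝ²} [IsFiniteMeasure ν] {δ ε : ℝ}

theorem scaledHeatFlowNorm_le (hp : 1 ≤ p) {t : ℝ} (ht : 0 < t) (hδ : 0 ≤ δ)
    (hball : ∀ x, ν.real (closedBall x δ) ≤ ε) :
    scaledHeatFlowNorm p ν t ≤
      ENNReal.ofReal ((4 * π)⁻¹ * (ε + rexp (-δ ^ 2 / (4 * t)) * ν.real univ))
        ^ (1 - 1 / p.toReal) * ν univ ^ (1 / p.toReal) := by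
  set α := 1 - 1 / p.toReal
  set A := (4 * π * t)⁻¹ * (ε + rexp (-δ ^ 2 / (4 * t)) * ν.real univ) with hA
  have hbound : ∀ x, ‖heatFlow ν t x‖ₑ ≤ ENNReal.ofReal A := fun x => by
    rw [Real.enorm_eq_ofReal (heatFlow_nonneg ht.le x)]
    exact ENNReal.ofReal_le_ofReal (heatFlow_le ht.le hδ hball x)
  have hL1 : ∫⁻ x, ‖heatFlow ν t x‖ₑ = ν univ := by
    simpa only [Real.enorm_eq_ofReal (heatFlow_nonneg ht.le _)] using lintegral_ofReal_heatFlow ht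
  calc scaledHeatFlowNorm p ν t
      ≤ ENNReal.ofReal (t ^ α) * (ENNReal.ofReal A ^ α * ν univ ^ (1 / p.toReal)) := by
        refine mul_le_mul_right ?_ _
        rw [← hL1]
        exact eLpNorm_le_rpow_mul_lintegral_rpow hp ENNReal.ofReal_ne_top hbound
    _ = ENNReal.ofReal (t * A) ^ α * ν univ ^ (1 / p.toReal) := by
        rw [← ENNReal.ofReal_rpow_of_pos ht, ← mul_assoc, ← ENNReal.mul_rpow_of_nonneg _ _
          (one_sub_one_div_toReal_nonneg hp), ← ENNReal.ofReal_mul ht.le]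
    _ = _ := by
        rw [hA]
        congr 3
        field_simp

theorem limsup_scaledHeatFlowNorm_le (hp : 1 ≤ p) (hδ : 0 < δ)
    (hball : ∀ x, ν.real (closedBall x δ) ≤ ε) :
    limsup (scaledHeatFlowNorm p ν) (𝓝[>] 0) ≤
      ENNReal.ofReal ((4 * π)⁻¹ * ε) ^ (1 - 1 / p.toReal) * ν univ ^ (1 / p.toReal) := by
  have hcont := continuous_ofReal_rpow_mul_const (α := 1 - 1 / p.toReal)
    (ENNReal.rpow_ne_top_of_nonneg (y := 1 / p.toReal) (by positivity) (measure_ne_top ν univ))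
  have hlim : Tendsto (fun t => (4 * π)⁻¹ * (ε + rexp (-δ ^ 2 / (4 * t)) * ν.real univ))
      (𝓝[>] 0) (𝓝 ((4 * π)⁻¹ * ε)) := by
    simpa using (((tendsto_exp_neg_sq_div_nhdsGT_zero hδ.ne').mul_const (ν.real univ)).const_add
      ε).const_mul (4 * π)⁻¹
  refine (limsup_le_limsup ?_).trans_eq ((hcont.tendsto _).comp hlim).limsup_eq
  filter_upwards [self_mem_nhdsWithin] with t ht
  exact scaledHeatFlowNorm_le hp ht hδ.le hball

theorem limsup_scaledHeatFlowNorm_le_measure_univ (hp : 1 ≤ p) :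
    limsup (scaledHeatFlowNorm p ν) (𝓝[>] 0) ≤ ν univ := by
  have hM : ENNReal.ofReal ((4 * π)⁻¹ * ν.real univ) ≤ ν univ := by
    rw [← ofReal_measureReal (measure_ne_top ν univ)]
    refine ENNReal.ofReal_le_ofReal (mul_le_of_le_one_left measureReal_nonneg ?_)
    exact inv_le_one_of_one_le₀ (by nlinarith [pi_gt_three])
  refine (limsup_scaledHeatFlowNorm_le hp one_pos fun x =>
    measureReal_mono (subset_univ _)).trans ?_
  calc _ ≤ ν univ ^ (1 - 1 / p.toReal) * ν univ ^ (1 / p.toReal) := by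
        gcongr
        exact one_sub_one_div_toReal_nonneg hp
    _ = ν univ := by
        rw [← ENNReal.rpow_add_of_nonneg _ _ (one_sub_one_div_toReal_nonneg hp) (by positivity),
          sub_add_cancel, ENNReal.rpow_one]

theorem tendsto_scaledHeatFlowNorm_zero [NullSingletonClass ν] (hp : 1 < p) :
    Tendsto (scaledHeatFlowNorm p ν) (𝓝[>] 0) (𝓝 0) := by
  refine tendsto_of_le_liminf_of_limsup_le zero_le ?_
  have hcont := continuous_ofReal_rpow_mul_const (α := 1 - 1 / p.toReal)
    (ENNReal.rpow_ne_top_of_nonneg (y := 1 / p.toReal) (by positivity) (measure_ne_top ν univ))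
  have hlim : Tendsto (fun ε => ENNReal.ofReal ((4 * π)⁻¹ * ε) ^ (1 - 1 / p.toReal) *
      ν univ ^ (1 / p.toReal)) (𝓝[>] 0) (𝓝 0) := by
    have := ((hcont.tendsto 0).comp
      ((continuous_const_mul (4 * π)⁻¹).tendsto' 0 0 (mul_zero _))).mono_left
        (nhdsWithin_le_nhds (s := Ioi (0 : ℝ)))
    rwa [ENNReal.ofReal_zero, ENNReal.zero_rpow_of_pos (one_sub_one_div_toReal_pos hp),
      zero_mul] at this
  refine ge_of_tendsto hlim ?_
  filter_upwards [self_mem_nhdsWithin] with ε hε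
  obtain ⟨δ, hδ, hball⟩ := exists_forall_measure_closedBall_le ν (ENNReal.ofReal_pos.2 hε)
  exact limsup_scaledHeatFlowNorm_le hp.le hδ fun x =>
    ENNReal.toReal_le_of_le_ofReal (le_of_lt hε) (hball x)

end ScaledNorm

theorem eLpNorm_heatEvol_le (μ : SignedMeasure ℝ²) {p : ℝ≥0∞} (hp : 1 ≤ p) {t : ℝ} (ht : 0 ≤ t)
    {S : Set ℝ²} (hS : MeasurableSet S) :
    eLpNorm (heatEvol μ t) p volume ≤ eLpNorm (heatFlow (μ.totalVariation.restrict S) t) p volume +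
      eLpNorm (heatFlow (μ.totalVariation.restrict Sᶜ) t) p volume := by
  have hsplit : heatFlow μ.totalVariation t =
      heatFlow (μ.totalVariation.restrict S) t + heatFlow (μ.totalVariation.restrict Sᶜ) t := by
    rw [← heatFlow_add ht, Measure.restrict_add_restrict_compl hS]
  calc eLpNorm (heatEvol μ t) p volume ≤ eLpNorm (heatFlow μ.totalVariation t) p volume :=
        eLpNorm_mono_real fun x => (Real.norm_eq_abs _).trans_le (abs_heatEvol_le μ ht x)
    _ ≤ _ := hsplit ▸ eLpNorm_add_le (stronglyMeasurable_heatFlow _ t).aestronglyMeasurable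
        (stronglyMeasurable_heatFlow _ t).aestronglyMeasurable hp

/-- For a finite signed Borel measure `μ` on `ℝ²` and `p ∈ (1,∞]`,
`limsup_{t→0⁺} t^{1-1/p} ‖e^{tΔ}μ‖_{L^p} ≤ C_p ‖μ‖_{pp}`, where
`‖μ‖_{pp} = ∑_{x} |μ({x})|` is the total variation of the atomic part. -/
theorem heat_atomic_limsup (p : ℝ≥0∞) (hp : 1 < p) :
    ∃ C : ℝ, 0 < C ∧ ∀ μ : MeasureTheory.SignedMeasure (EuclideanSpace ℝ (Fin 2)),
      Filter.limsup
        (fun t : ℝ => ENNReal.ofReal (t ^ (1 - 1 / p.toReal)) *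
          eLpNorm (heatEvol μ t) p volume) (𝓝[>] (0 : ℝ)) ≤
        ENNReal.ofReal (C * ∑' x : EuclideanSpace ℝ (Fin 2), |μ {x}|) := by
  refine ⟨1, one_pos, fun μ => ?_⟩
  set ρ := μ.totalVariation
  have hS : MeasurableSet ρ.atoms := ρ.countable_atoms.measurableSet
  calc _ ≤ limsup (scaledHeatFlowNorm p (ρ.restrict ρ.atoms) +
        scaledHeatFlowNorm p (ρ.restrict ρ.atomsᶜ)) (𝓝[>] 0) := by
        refine limsup_le_limsup ?_
        filter_upwards [self_mem_nhdsWithin] with t ht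
        rw [Pi.add_apply, scaledHeatFlowNorm, scaledHeatFlowNorm, ← mul_add]
        exact mul_le_mul_right (eLpNorm_heatEvol_le μ hp.le (le_of_lt ht) hS) _
    _ = limsup (scaledHeatFlowNorm p (ρ.restrict ρ.atoms)) (𝓝[>] 0) :=
        ENNReal.limsup_add_of_right_tendsto_zero (tendsto_scaledHeatFlowNorm_zero hp) _
    _ ≤ ρ.restrict ρ.atoms univ := limsup_scaledHeatFlowNorm_le_measure_univ hp.le
    _ = _ := by
        rw [one_mul, μ.ofReal_tsum_abs_apply_singleton, Measure.restrict_atoms_apply_univ]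
end
end

section
/- Let $f : \mathbb{R}^2 \to \mathbb{R}$ with $\int f \, d\xi = 0$, $f \in L^1(\mathbb{R}^2)$, and $\int |\xi| |f(\xi)| d\xi < \infty$. If $|f(\xi)| \lesssim (1+|\xi|)^{-4}$ then the Newtonian potential $c(\xi) = -\frac{1}{2\pi}\int \log|\xi - \eta| f(\eta)\, d\eta$ satisfies $|\nabla c(\xi)| \le C |\xi|^{-2}$ for $|\xi| \ge 1$. -/
/-! Since `∫ f = 0`, the kernel `K x = ‖x‖⁻² • x` may be replaced by `K (ξ - η) - K ξ`, whose norm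
is `‖η‖ / (‖ξ - η‖ * ‖ξ‖)` (inversion in the unit sphere). Where `‖ξ - η‖ ≥ ‖ξ‖ / 2` this is at
most `2 ‖η‖ / ‖ξ‖²`, and the first moment of `f` gives `O(‖ξ‖⁻²)`. On the ball
`‖ξ - η‖ < ‖ξ‖ / 2` one has `‖η‖ ≥ ‖ξ‖ / 2`, so `|f η| = O(‖ξ‖⁻⁴)` there, while in the plane
`∫_{B(0,r)} ‖x‖⁻¹ = 2 |B(0,1)| r`; this part is `O(‖ξ‖⁻³)`. -/

open MeasureTheory Real Metric Set Module

section BallIntegral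

variable {E : Type*} [NormedAddCommGroup E] [NormedSpace ℝ E] [FiniteDimensional ℝ E]
  [MeasurableSpace E] [BorelSpace E] (μ : Measure E) [μ.IsAddHaarMeasure]

theorem integrableOn_ball_inv_norm (hE : 2 ≤ finrank ℝ E) (r : ℝ) :
    IntegrableOn (fun x : E => ‖x‖⁻¹) (ball 0 r) μ := by
  refine integrableOn_ball_of_norm_le_rpow (C := 1) (α := 1) (by omega)
    (by exact_mod_cast hE) (.of_forall fun x => ?_) (by fun_prop)
  simp [rpow_neg_one]

theorem setIntegral_ball_inv_norm (hE : 2 ≤ finrank ℝ E) {r : ℝ} (hr : 0 ≤ r) :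
    ∫ x in ball 0 r, ‖x‖⁻¹ ∂μ =
      finrank ℝ E / (finrank ℝ E - 1) * μ.real (ball 0 1) * r ^ (finrank ℝ E - 1) := by
  have : Nontrivial E := Module.nontrivial_of_finrank_pos (R := ℝ) (by omega)
  obtain ⟨m, hm⟩ : ∃ m, finrank ℝ E = m + 2 := ⟨finrank ℝ E - 2, by omega⟩
  have hradial : (ball (0 : E) r).indicator (fun x => ‖x‖⁻¹) =
      fun x => (Iio r).indicator (fun y : ℝ => y⁻¹) ‖x‖ := by
    ext x; by_cases h : ‖x‖ < r <;> simp [indicator, h]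
  have hpolar : ∫ y in Ioi (0 : ℝ), y ^ (m + 1) • (Iio r).indicator (fun y : ℝ => y⁻¹) y =
      r ^ (m + 1) / (m + 1) := by
    have hind : (fun y : ℝ => y ^ (m + 1) • (Iio r).indicator (fun y : ℝ => y⁻¹) y) =
        (Iio r).indicator (fun y => y ^ (m + 1) * y⁻¹) := by
      ext y; by_cases h : y < r <;> simp [indicator, h]
    rw [hind, setIntegral_indicator measurableSet_Iio, Ioi_inter_Iio,
      setIntegral_congr_fun measurableSet_Ioo (g := fun y => y ^ m) fun y hy => ?_,
      ← integral_Ioc_eq_integral_Ioo, ← intervalIntegral.integral_of_le hr, integral_pow]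
    · simp
    · field_simp [hy.1.ne']
      ring
  rw [← integral_indicator measurableSet_ball, hradial, integral_fun_norm_addHaar, hm,
    show m + 2 - 1 = m + 1 by omega, hpolar]
  simp only [nsmul_eq_mul, smul_eq_mul]
  push_cast
  rw [show (m : ℝ) + 2 - 1 = m + 1 by ring]
  field_simp

end BallIntegral

theorem integral_smul_eq_integral_smul_sub_of_integral_eq_zero {α F : Type*} [MeasurableSpace α]
    {μ : Measure α} [NormedAddCommGroup F] [NormedSpace ℝ F] [CompleteSpace F] {f : α → ℝ}
    {k : α → F} (v : F) (hf : Integrable f μ) (hmean : ∫ a, f a ∂μ = 0)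
    (hk : Integrable (fun a => f a • (k a - v)) μ) :
    ∫ a, f a • k a ∂μ = ∫ a, f a • (k a - v) ∂μ := by
  have hk' : Integrable (fun a => f a • k a) μ := by
    refine (hk.add (hf.smul_const v)).congr (.of_forall fun a => ?_)
    simp [smul_sub]
  simp_rw [smul_sub]
  rw [integral_sub hk' (hf.smul_const v), integral_smul_const, hmean, zero_smul, sub_zero]

section Kernel

variable {E : Type*} [NormedAddCommGroup E] [InnerProductSpace ℝ E]

theorem norm_inv_norm_sq_smul_sub {a b : E} (ha : a ≠ 0) (hb : b ≠ 0) :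
    ‖(‖a‖ ^ 2)⁻¹ • a - (‖b‖ ^ 2)⁻¹ • b‖ = ‖a - b‖ / (‖a‖ * ‖b‖) := by
  have ha' : ‖a‖ ≠ 0 := norm_ne_zero_iff.2 ha
  have hb' : ‖b‖ ≠ 0 := norm_ne_zero_iff.2 hb
  rw [← sq_eq_sq₀ (norm_nonneg _) (by positivity), norm_sub_sq_real, div_pow, norm_sub_sq_real,
    norm_smul, norm_smul, inner_smul_left, inner_smul_right]
  simp only [norm_inv, norm_pow, norm_norm, RCLike.conj_to_real]
  field_simp
  ring

theorem norm_inv_norm_sq_smul_sub_le_of_far {ξ η : E} (hξ : ξ ≠ 0) (hfar : ‖ξ‖ / 2 ≤ ‖ξ - η‖) :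
    ‖(‖ξ - η‖ ^ 2)⁻¹ • (ξ - η) - (‖ξ‖ ^ 2)⁻¹ • ξ‖ ≤ 2 * ‖η‖ / ‖ξ‖ ^ 2 := by
  have hξ' : 0 < ‖ξ‖ := norm_pos_iff.2 hξ
  have hξη : ξ - η ≠ 0 := norm_pos_iff.1 (by linarith)
  rw [norm_inv_norm_sq_smul_sub hξη hξ, sub_sub_cancel_left, norm_neg]
  calc ‖η‖ / (‖ξ - η‖ * ‖ξ‖) ≤ ‖η‖ / (‖ξ‖ / 2 * ‖ξ‖) := by gcongr
    _ = 2 * ‖η‖ / ‖ξ‖ ^ 2 := by field_simp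

theorem norm_inv_norm_sq_smul_sub_le_of_near {ξ η : E} (hξ : ξ ≠ 0) (hne : η ≠ ξ)
    (hnear : ‖ξ - η‖ < ‖ξ‖ / 2) :
    ‖(‖ξ - η‖ ^ 2)⁻¹ • (ξ - η) - (‖ξ‖ ^ 2)⁻¹ • ξ‖ ≤ 3 / 2 * ‖ξ - η‖⁻¹ := by
  have hξ' : 0 < ‖ξ‖ := norm_pos_iff.2 hξ
  have hξη : 0 < ‖ξ - η‖ := norm_pos_iff.2 (sub_ne_zero.2 hne.symm)
  have hη : ‖η‖ ≤ 3 / 2 * ‖ξ‖ := by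
    linarith [norm_sub_norm_le η ξ, norm_sub_rev η ξ]
  rw [norm_inv_norm_sq_smul_sub (sub_ne_zero.2 hne.symm) hξ, sub_sub_cancel_left, norm_neg]
  calc ‖η‖ / (‖ξ - η‖ * ‖ξ‖) ≤ 3 / 2 * ‖ξ‖ / (‖ξ - η‖ * ‖ξ‖) := by gcongr
    _ = 3 / 2 * ‖ξ - η‖⁻¹ := by field_simp

theorem abs_mul_norm_inv_norm_sq_smul_sub_le {f : E → ℝ} {C₀ : ℝ} {ξ η : E} (hξ : ξ ≠ 0)
    (hne : η ≠ ξ) (hdecay : |f η| ≤ C₀ * (1 + ‖η‖) ^ (-(4 : ℝ))) :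
    |f η| * ‖(‖ξ - η‖ ^ 2)⁻¹ • (ξ - η) - (‖ξ‖ ^ 2)⁻¹ • ξ‖ ≤
      2 / ‖ξ‖ ^ 2 * (‖η‖ * |f η|) +
        24 * C₀ / ‖ξ‖ ^ 4 * (ball 0 (‖ξ‖ / 2)).indicator (fun x => ‖x‖⁻¹) (ξ - η) := by
  have hξ' : 0 < ‖ξ‖ := norm_pos_iff.2 hξ
  rw [rpow_neg (by positivity), show (4 : ℝ) = (4 : ℕ) by norm_num, rpow_natCast] at hdecay
  have hC₀ : 0 ≤ C₀ := nonneg_of_mul_nonneg_left ((abs_nonneg _).trans hdecay) (by positivity)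
  by_cases hfar : ‖ξ‖ / 2 ≤ ‖ξ - η‖
  · have hout : ξ - η ∉ ball 0 (‖ξ‖ / 2) := by simpa using hfar
    rw [indicator_of_notMem hout, mul_zero, add_zero]
    calc |f η| * _ ≤ |f η| * (2 * ‖η‖ / ‖ξ‖ ^ 2) :=
          mul_le_mul_of_nonneg_left (norm_inv_norm_sq_smul_sub_le_of_far hξ hfar) (abs_nonneg _)
      _ = 2 / ‖ξ‖ ^ 2 * (‖η‖ * |f η|) := by ring
  · rw [not_le] at hfar
    have hin : ξ - η ∈ ball 0 (‖ξ‖ / 2) := by simpa using hfar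
    rw [indicator_of_mem hin]
    have hη : ‖ξ‖ / 2 ≤ 1 + ‖η‖ := by linarith [norm_sub_norm_le ξ η]
    have hf : |f η| ≤ 16 * C₀ / ‖ξ‖ ^ 4 :=
      calc |f η| ≤ C₀ * ((‖ξ‖ / 2) ^ 4)⁻¹ := by
            refine hdecay.trans (mul_le_mul_of_nonneg_left ?_ hC₀)
            gcongr
        _ = 16 * C₀ / ‖ξ‖ ^ 4 := by field_simp; ring
    calc |f η| * _ ≤ 16 * C₀ / ‖ξ‖ ^ 4 * (3 / 2 * ‖ξ - η‖⁻¹) :=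
          mul_le_mul hf (norm_inv_norm_sq_smul_sub_le_of_near hξ hne hfar)
            (norm_nonneg _) (by positivity)
      _ = 24 * C₀ / ‖ξ‖ ^ 4 * ‖ξ - η‖⁻¹ := by ring
      _ ≤ _ := le_add_of_nonneg_left (by positivity)

end Kernel

section Planar

variable {E : Type*} [NormedAddCommGroup E] [InnerProductSpace ℝ E] [FiniteDimensional ℝ E]
  [MeasurableSpace E] [BorelSpace E] (μ : Measure E) [μ.IsAddHaarMeasure]

theorem norm_integral_smul_inv_norm_sq_smul_le (hE : finrank ℝ E = 2) {f : E → ℝ} {C₀ : ℝ}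
    (hf : Integrable f μ) (hmean : ∫ η, f η ∂μ = 0) (hf₁ : Integrable (fun η => ‖η‖ * |f η|) μ)
    (hdecay : ∀ η, |f η| ≤ C₀ * (1 + ‖η‖) ^ (-(4 : ℝ))) {ξ : E} (hξ : 1 ≤ ‖ξ‖) :
    ‖∫ η, f η • ((‖ξ - η‖ ^ 2)⁻¹ • (ξ - η)) ∂μ‖ ≤
      (2 * ∫ η, ‖η‖ * |f η| ∂μ + 24 * C₀ * μ.real (ball 0 1)) / ‖ξ‖ ^ 2 := by
  have : Nontrivial E := Module.nontrivial_of_finrank_pos (R := ℝ) (by omega)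
  have hξ₀ : ξ ≠ 0 := norm_pos_iff.1 (by linarith)
  have hC₀ : 0 ≤ C₀ := by simpa using (abs_nonneg _).trans (hdecay 0)
  set g : E → ℝ := fun η => 2 / ‖ξ‖ ^ 2 * (‖η‖ * |f η|) +
    24 * C₀ / ‖ξ‖ ^ 4 * (ball 0 (‖ξ‖ / 2)).indicator (fun x => ‖x‖⁻¹) (ξ - η)
  have hsing : Integrable ((ball (0 : E) (‖ξ‖ / 2)).indicator fun x => ‖x‖⁻¹) μ :=
    (integrableOn_ball_inv_norm μ hE.ge _).integrable_indicator measurableSet_ball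
  have hg : Integrable g μ := (hf₁.const_mul _).add ((hsing.comp_sub_left ξ).const_mul _)
  have hbound : ∀ᵐ η ∂μ, ‖f η • ((‖ξ - η‖ ^ 2)⁻¹ • (ξ - η) - (‖ξ‖ ^ 2)⁻¹ • ξ)‖ ≤ g η := by
    filter_upwards [compl_mem_ae_iff.2 (measure_singleton (μ := μ) ξ)] with η hη
    rw [norm_smul, Real.norm_eq_abs]
    exact abs_mul_norm_inv_norm_sq_smul_sub_le hξ₀ hη (hdecay η)
  have hint : ∫ η, g η ∂μ =
      2 * (∫ η, ‖η‖ * |f η| ∂μ) / ‖ξ‖ ^ 2 + 24 * C₀ * μ.real (ball 0 1) / ‖ξ‖ ^ 3 := by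
    rw [integral_add (hf₁.const_mul _) ((hsing.comp_sub_left ξ).const_mul _), integral_const_mul,
      integral_const_mul, integral_sub_left_eq_self, integral_indicator measurableSet_ball,
      setIntegral_ball_inv_norm μ hE.ge (by positivity), hE]
    field_simp
    ring
  rw [integral_smul_eq_integral_smul_sub_of_integral_eq_zero ((‖ξ‖ ^ 2)⁻¹ • ξ) hf hmean
    (hg.mono' (by fun_prop) hbound)]
  refine (norm_integral_le_of_norm_le hg hbound).trans ?_
  rw [hint, add_div]
  gcongr
  norm_num

end Planar

/-- Let `f : ℝ² → ℝ` with `∫ f = 0`, `f ∈ L¹`, `∫ |ξ||f(ξ)| dξ < ∞`. If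
`|f(ξ)| ≤ C₀ (1+|ξ|)^{-4}`, then the gradient of the Newtonian potential,
`∇c(ξ) = -(2π)⁻¹ ∫ (ξ-η)/|ξ-η|² f(η) dη`, satisfies `|∇c(ξ)| ≤ C |ξ|^{-2}`
for `|ξ| ≥ 1`. -/
theorem newtonian_gradient_decay (f : EuclideanSpace ℝ (Fin 2) → ℝ) (C₀ : ℝ)
    (hf1 : Integrable f) (hmean : (∫ ξ, f ξ) = 0)
    (hf2 : Integrable (fun ξ => ‖ξ‖ * |f ξ|))
    (hdecay : ∀ ξ, |f ξ| ≤ C₀ * (1 + ‖ξ‖) ^ (-(4 : ℝ))) :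
    ∃ C : ℝ, ∀ ξ : EuclideanSpace ℝ (Fin 2), 1 ≤ ‖ξ‖ →
      ‖(-(2 * Real.pi)⁻¹ : ℝ) • ∫ η, f η • ((‖ξ - η‖ ^ 2)⁻¹ • (ξ - η))‖ ≤
        C * ‖ξ‖ ^ (-(2 : ℝ)) := by
  refine ⟨2 * (∫ η, ‖η‖ * |f η|) + 24 * C₀ * volume.real (ball (0 : EuclideanSpace ℝ (Fin 2)) 1),
    fun ξ hξ => ?_⟩
  have hfactor : |(-(2 * π)⁻¹ : ℝ)| ≤ 1 := by
    rw [abs_neg, abs_of_pos (by positivity)]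
    exact inv_le_one_of_one_le₀ (by linarith [pi_gt_three])
  rw [norm_smul, Real.norm_eq_abs, rpow_neg (norm_nonneg _), rpow_two, ← div_eq_mul_inv]
  exact (mul_le_of_le_one_left (norm_nonneg _) hfactor).trans <|
    norm_integral_smul_inv_norm_sq_smul_le volume finrank_euclideanSpace_fin hf1 hmean hf2 hdecay hξ
end

section
/- Fix $n \ge 2$ an integer and let $G : (0,\infty) \to (0,\infty)$ be continuous. Suppose $g \in C^2((0,\infty))$ is a strictly positive solution of $(r g')' - \frac{1}{r} g + r G(r) g = 0$ on $(0,\infty)$ with $g(r) \sim c_0 r$ as $r \to 0^+$ ($c_0 > 0$) and $g(r) \sim c_1 r$, $g'(r) \to c_1 > 0$ as $r \to \infty$. If $f \in C^2((0,\infty))$ solves $(r f')' - \frac{n^2}{r} f + r G(r) f = 0$ with $f(r) \sim a r^n$ as $r \to 0^+$ and $f(r) \sim b r^{-n}$, $|f'(r)| \lesssim r^{-n-1}$ as $r \to \infty$, then $f \equiv 0$. -/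
open Real Filter Topology

noncomputable section

private lemma angular_core (n : ℕ) (hn : 2 ≤ n) (G : ℝ → ℝ)
    (g g' g'' f f' f'' : ℝ → ℝ)
    (hgd : ∀ r > (0 : ℝ), HasDerivAt g (g' r) r)
    (hgd2 : ∀ r > (0 : ℝ), HasDerivAt g' (g'' r) r)
    (hgpos : ∀ r > (0 : ℝ), 0 < g r)
    (hgeq : ∀ r > (0 : ℝ), g' r + r * g'' r - g r / r + r * G r * g r = 0)
    (hfd : ∀ r > (0 : ℝ), HasDerivAt f (f' r) r)
    (hfd2 : ∀ r > (0 : ℝ), HasDerivAt f' (f'' r) r)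
    (hfeq : ∀ r > (0 : ℝ), f' r + r * f'' r - (n : ℝ) ^ 2 / r * f r + r * G r * f r = 0)
    (h0 : Tendsto (fun r => f r / g r) (𝓝[>] (0:ℝ)) (𝓝 0))
    (hinf : Tendsto (fun r => f r / g r) atTop (𝓝 0))
    (r₀ : ℝ) (hr₀ : 0 < r₀) (hfr₀ : 0 < f r₀) : False := by
  set h : ℝ → ℝ := fun r => f r / g r with hh
  have hM : 0 < h r₀ := div_pos hfr₀ (hgpos r₀ hr₀)
  -- small radii
  obtain ⟨ε, hεpos, hε⟩ : ∃ ε > (0:ℝ), ∀ r, 0 < r → r < ε → h r < h r₀ := by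
    rcases ((nhdsGT_basis (0:ℝ)).eventually_iff).mp (h0.eventually_lt_const hM) with
      ⟨ε, hε0, hε⟩
    exact ⟨ε, hε0, fun r h1 h2 => hε ⟨h1, h2⟩⟩
  -- large radii
  obtain ⟨R₀, hR₀⟩ := eventually_atTop.mp (hinf.eventually_lt_const hM)
  set R : ℝ := max R₀ (r₀ + 1) with hR
  have hRbig : ∀ r, R ≤ r → h r < h r₀ := fun r hr => hR₀ r (le_trans (le_max_left _ _) hr)
  have hεr₀ : ε ≤ r₀ := by
    by_contra hco
    push_neg at hco
    exact absurd (hε r₀ hr₀ hco) (lt_irrefl _)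
  have hr₀R : r₀ ≤ R := le_trans (by linarith) (le_max_right _ _)
  have hr₀mem : r₀ ∈ Set.Icc ε R := ⟨hεr₀, hr₀R⟩
  have hcont : ContinuousOn h (Set.Icc ε R) := fun x hx => by
    have hx0 : 0 < x := lt_of_lt_of_le hεpos hx.1
    exact (((hfd x hx0).continuousAt).div ((hgd x hx0).continuousAt)
      (hgpos x hx0).ne').continuousWithinAt
  obtain ⟨rs, hrsmem, hrsmax⟩ := isCompact_Icc.exists_isMaxOn ⟨r₀, hr₀mem⟩ hcont
  have hrs0 : (0:ℝ) < rs := lt_of_lt_of_le hεpos hrsmem.1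
  have hglob : ∀ r, 0 < r → h r ≤ h rs := by
    intro r hr
    rcases lt_or_ge r ε with hlt | hge
    · exact le_trans (hε r hr hlt).le (hrsmax hr₀mem)
    rcases le_or_gt r R with hle | hgt
    · exact hrsmax ⟨hge, hle⟩
    · exact le_trans (hRbig r hgt.le).le (hrsmax hr₀mem)
  have hrsM : 0 < h rs := lt_of_lt_of_le hM (hrsmax hr₀mem)
  have hfrs : 0 < f rs := by
    have : f rs = h rs * g rs := (div_mul_cancel₀ (f rs) (hgpos rs hrs0).ne').symm
    rw [this]
    exact mul_pos hrsM (hgpos rs hrs0)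
  -- derivative of h
  have hdh : ∀ x > (0:ℝ), HasDerivAt h ((f' x * g x - f x * g' x) / g x ^ 2) x :=
    fun x hx => (hfd x hx).div (hgd x hx) (hgpos x hx).ne'
  have hloc : IsLocalMax h rs := by
    filter_upwards [Ioi_mem_nhds hrs0] with x hx using hglob x hx
  have hW0 : f' rs * g rs - f rs * g' rs = 0 := by
    have hzero := hloc.hasDerivAt_eq_zero (hdh rs hrs0)
    have hg2 : g rs ^ 2 ≠ 0 := pow_ne_zero _ (hgpos rs hrs0).ne'
    exact (div_eq_zero_iff.mp hzero).resolve_right hg2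
  -- positivity of f near rs
  obtain ⟨δ, hδpos, hball⟩ := Metric.eventually_nhds_iff.mp
    (((hfd rs hrs0).continuousAt).eventually_const_lt hfrs)
  set d : ℝ := δ / 2 with hd
  have hdpos : 0 < d := by positivity
  have hfpos : ∀ x ∈ Set.Icc rs (rs + d), 0 < f x := by
    intro x hx
    apply hball
    rw [Real.dist_eq, abs_of_nonneg (by linarith [hx.1])]
    have := hx.2
    simp only [hd] at this ⊢
    linarith
  -- Wronskian
  set W : ℝ → ℝ := fun r => r * (f' r * g r - f r * g' r) with hWdef
  have hWd : ∀ x > (0:ℝ), HasDerivAt W (((n:ℝ) ^ 2 - 1) / x * (f x * g x)) x := by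
    intro x hx
    have H : HasDerivAt W
        (1 * (f' x * g x - f x * g' x) +
          x * ((f'' x * g x + f' x * g' x) - (f' x * g' x + f x * g'' x))) x :=
      (hasDerivAt_id x).mul (((hfd2 x hx).mul (hgd x hx)).sub ((hfd x hx).mul (hgd2 x hx)))
    have e : 1 * (f' x * g x - f x * g' x) +
        x * ((f'' x * g x + f' x * g' x) - (f' x * g' x + f x * g'' x)) =
        ((n:ℝ) ^ 2 - 1) / x * (f x * g x) := by
      have e1 := hfeq x hx
      have e2 := hgeq x hx
      linear_combination g x * e1 - f x * e2
    exact e ▸ H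
  have hWc : ContinuousOn W (Set.Icc rs (rs + d)) := fun x hx =>
    (hWd x (lt_of_lt_of_le hrs0 hx.1)).continuousAt.continuousWithinAt
  have hn2 : (0:ℝ) < (n:ℝ) ^ 2 - 1 := by
    have h2 : (2:ℝ) ≤ (n:ℝ) := by exact_mod_cast hn
    nlinarith
  have hWmono : StrictMonoOn W (Set.Icc rs (rs + d)) := by
    apply strictMonoOn_of_deriv_pos (convex_Icc _ _) hWc
    intro x hx
    rw [interior_Icc] at hx
    have hx0 : 0 < x := lt_trans hrs0 hx.1
    rw [(hWd x hx0).deriv]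
    exact mul_pos (div_pos hn2 hx0)
      (mul_pos (hfpos x ⟨hx.1.le, hx.2.le⟩) (hgpos x hx0))
  have hWrs : W rs = 0 := by simp [hWdef, hW0]
  have hWpos : ∀ x ∈ Set.Ioc rs (rs + d), 0 < W x := by
    intro x hx
    have := hWmono (Set.left_mem_Icc.mpr (by linarith)) ⟨hx.1.le, hx.2⟩ hx.1
    rwa [hWrs] at this
  -- h strictly increasing past rs : contradiction with the max
  have hhc : ContinuousOn h (Set.Icc rs (rs + d)) := fun x hx =>
    (hdh x (lt_of_lt_of_le hrs0 hx.1)).continuousAt.continuousWithinAt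
  have hhmono : StrictMonoOn h (Set.Icc rs (rs + d)) := by
    apply strictMonoOn_of_deriv_pos (convex_Icc _ _) hhc
    intro x hx
    rw [interior_Icc] at hx
    have hx0 : 0 < x := lt_trans hrs0 hx.1
    rw [(hdh x hx0).deriv]
    have hWx : 0 < W x := hWpos x ⟨hx.1, hx.2.le⟩
    have hA : 0 < f' x * g x - f x * g' x := by
      have hdiv : 0 < x * (f' x * g x - f x * g' x) / x := div_pos hWx hx0
      rwa [mul_div_cancel_left₀ _ hx0.ne'] at hdiv
    exact div_pos hA (pow_pos (hgpos x hx0) 2)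
  have hlt : h rs < h (rs + d) :=
    hhmono (Set.left_mem_Icc.mpr (by linarith)) (Set.right_mem_Icc.mpr (by linarith))
      (by linarith)
  exact absurd (hglob (rs + d) (by linarith)) (not_le.mpr hlt)

/-- Comparison-principle step ruling out bounded solutions in the angular modes
`n ≥ 2`: if `g > 0` solves `(r g')' - g/r + r G g = 0` with `g ~ c₀ r` at `0`
and `g ~ c₁ r`, `g' → c₁ > 0` at `∞`, and `f` solves
`(r f')' - n² f / r + r G f = 0` with `f ~ a rⁿ` at `0`, `f ~ b r⁻ⁿ` and
`|f'| ≲ r^{-n-1}` at `∞`, then `f ≡ 0`. -/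
theorem angular_mode_vanishes (n : ℕ) (hn : 2 ≤ n) (G : ℝ → ℝ)
    (hGcont : ContinuousOn G (Set.Ioi 0)) (hGpos : ∀ r > (0 : ℝ), 0 < G r)
    (g g' g'' f f' f'' : ℝ → ℝ) (c₀ c₁ a b : ℝ)
    (hgd : ∀ r > (0 : ℝ), HasDerivAt g (g' r) r)
    (hgd2 : ∀ r > (0 : ℝ), HasDerivAt g' (g'' r) r)
    (hgpos : ∀ r > (0 : ℝ), 0 < g r)
    -- the equation `(r g')' - g/r + r G g = 0`, with `(r g')' = g' + r g''`
    (hgeq : ∀ r > (0 : ℝ), g' r + r * g'' r - g r / r + r * G r * g r = 0)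
    (hg0 : Tendsto (fun r => g r / r) (nhdsWithin 0 (Set.Ioi 0)) (nhds c₀))
    (hc₀ : 0 < c₀)
    (hginf : Tendsto (fun r => g r / r) atTop (nhds c₁))
    (hg'inf : Tendsto g' atTop (nhds c₁)) (hc₁ : 0 < c₁)
    (hfd : ∀ r > (0 : ℝ), HasDerivAt f (f' r) r)
    (hfd2 : ∀ r > (0 : ℝ), HasDerivAt f' (f'' r) r)
    -- the equation `(r f')' - n² f / r + r G f = 0`
    (hfeq : ∀ r > (0 : ℝ), f' r + r * f'' r - (n : ℝ) ^ 2 / r * f r + r * G r * f r = 0)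
    (hf0 : Tendsto (fun r => f r / r ^ (n : ℝ)) (nhdsWithin 0 (Set.Ioi 0)) (nhds a))
    (hfinf : Tendsto (fun r => f r * r ^ (n : ℝ)) atTop (nhds b))
    (hf'bd : ∃ Cf : ℝ, ∀ᶠ r in atTop, |f' r| ≤ Cf * r ^ (-(n : ℝ) - 1)) :
    ∀ r > (0 : ℝ), f r = 0 := by
  -- limit of f/g at 0+
  have hg0inv : Tendsto (fun r => r / g r) (𝓝[>] (0:ℝ)) (𝓝 c₀⁻¹) := by
    have := hg0.inv₀ hc₀.ne'
    simpa only [inv_div] using this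
  have t1 : Tendsto (fun r : ℝ => r ^ ((n:ℝ) - 1)) (𝓝[>] (0:ℝ)) (𝓝 0) := by
    have hc : ContinuousAt (fun x : ℝ => x ^ ((n:ℝ) - 1)) 0 :=
      Real.continuousAt_rpow_const 0 _ (Or.inr (by
        have : (2:ℝ) ≤ (n:ℝ) := by exact_mod_cast hn
        linarith))
    have ht := hc.tendsto
    rw [Real.zero_rpow (by
      have : (2:ℝ) ≤ (n:ℝ) := by exact_mod_cast hn
      intro hcon; rw [sub_eq_zero] at hcon; linarith [hcon ▸ this])] at ht
    exact ht.mono_left nhdsWithin_le_nhds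
  have h0 : Tendsto (fun r => f r / g r) (𝓝[>] (0:ℝ)) (𝓝 0) := by
    have hprod := (hf0.mul t1).mul hg0inv
    have heq : (fun r : ℝ => f r / r ^ (n:ℝ) * r ^ ((n:ℝ) - 1) * (r / g r))
        =ᶠ[𝓝[>] (0:ℝ)] fun r => f r / g r := by
      filter_upwards [self_mem_nhdsWithin] with r hr
      have hr0 : (0:ℝ) < r := hr
      have hrn : r ^ (n:ℝ) ≠ 0 := (Real.rpow_pos_of_pos hr0 _).ne'
      have key : r ^ ((n:ℝ) - 1) * r = r ^ (n:ℝ) := by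
        have : r ^ ((n:ℝ) - 1 + 1) = r ^ ((n:ℝ) - 1) * r ^ (1:ℝ) := Real.rpow_add hr0 _ _
        rw [Real.rpow_one] at this
        rw [← this]; norm_num
      calc f r / r ^ (n:ℝ) * r ^ ((n:ℝ) - 1) * (r / g r)
          = f r * (r ^ ((n:ℝ) - 1) * r) / r ^ (n:ℝ) / g r := by ring
        _ = f r * r ^ (n:ℝ) / r ^ (n:ℝ) / g r := by rw [key]
        _ = f r / g r := by rw [mul_div_assoc, div_self hrn, mul_one]
    have := hprod.congr' heq
    simpa using this
  -- limit of f/g at ∞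
  have hg1inv : Tendsto (fun r => r / g r) atTop (𝓝 c₁⁻¹) := by
    have := hginf.inv₀ hc₁.ne'
    simpa only [inv_div] using this
  have t2 : Tendsto (fun r : ℝ => r ^ (-(n:ℝ) - 1)) atTop (𝓝 0) := by
    have hexp : (-(n:ℝ) - 1) = -((n:ℝ) + 1) := by ring
    rw [hexp]
    exact tendsto_rpow_neg_atTop (by positivity)
  have hinf : Tendsto (fun r => f r / g r) atTop (𝓝 0) := by
    have hprod := (hfinf.mul t2).mul hg1inv
    have heq : (fun r : ℝ => f r * r ^ (n:ℝ) * r ^ (-(n:ℝ) - 1) * (r / g r))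
        =ᶠ[atTop] fun r => f r / g r := by
      filter_upwards [eventually_gt_atTop (0:ℝ)] with r hr0
      have key : r ^ (n:ℝ) * r ^ (-(n:ℝ) - 1) = r⁻¹ := by
        rw [← Real.rpow_add hr0]
        have hexp : (n:ℝ) + (-(n:ℝ) - 1) = -1 := by ring
        rw [hexp, Real.rpow_neg_one]
      calc f r * r ^ (n:ℝ) * r ^ (-(n:ℝ) - 1) * (r / g r)
          = f r * (r ^ (n:ℝ) * r ^ (-(n:ℝ) - 1)) * r / g r := by ring
        _ = f r * r⁻¹ * r / g r := by rw [key]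
        _ = f r / g r := by rw [mul_assoc, inv_mul_cancel₀ hr0.ne', mul_one]
    have := hprod.congr' heq
    simpa using this
  intro r hr
  by_contra hne
  rcases (Ne.lt_or_gt hne) with hneg | hpos
  · exact angular_core n hn G g g' g'' (fun x => -f x) (fun x => -f' x) (fun x => -f'' x)
      hgd hgd2 hgpos hgeq (fun x hx => (hfd x hx).neg) (fun x hx => (hfd2 x hx).neg)
      (fun x hx => by linear_combination -(hfeq x hx))
      (by simpa [neg_div] using h0.neg) (by simpa [neg_div] using hinf.neg)
      r hr (by simpa using hneg)
  · exact angular_core n hn G g g' g'' f f' f''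
      hgd hgd2 hgpos hgeq hfd hfd2 hfeq h0 hinf r hr hpos
end
end

section
/- Let $m > 1$ and let $a(\tau) = 1 - e^{-\tau}$. Suppose $\phi : (\tau_0, \tau_0 + \bar T) \to [0,\infty)$ is continuous, locally integrable near $\tau_0$, and satisfies $\phi(\tau) \le C_1 a(\tau - \tau_0)^{-1/2} + C_2 \int_{\tau_0}^{\tau} a(\tau - s)^{-1/p}(\phi(s) + K)\, ds$ for some $p \in (1,2)$, constants $C_1, C_2, K \ge 0$. Then there exists $\bar T > 0$, depending only on $C_2, K, p$, such that $\phi(\tau) \le 2(C_1 + 1) a(\tau - \tau_0)^{-1/2}$ for $\tau \in (\tau_0, \tau_0 + \bar T)$. -/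
/-
Since `φ` may blow up at `τ₀`, what gets absorbed is not a supremum of `φ` but the Abel integral
`L(τ) = ∫_{τ₀}^τ (τ - s)^{-q} (φ(s) + K) ds`, `q = 1/p`, which is finite by the integrability
hypothesis. For `t ≤ 1` the kernel `(1 - e^{-t})^{-q}` lies between `t^{-q}` and `2 t^{-q}`.
Inserting the inequality for `φ(s)` into `L(τ)` and exchanging the order of integration, the
iterated kernel `∫_r^τ (τ - s)^{-q} (s - r)^{-q} ds` is at most
`4/(1-q) · (τ - τ₀)^{1-q} (τ - r)^{-q}`, so `L(τ) ≤ X + ½ L(τ)` once `C₂ (τ - τ₀)^{1-q}` is small,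
where `X` is the explicit contribution of `C₁ a^{-1/2}` and `K`. Hence `L(τ) ≤ 2X`, and the
inequality for `φ(τ)` gives the claim.
-/

open MeasureTheory Real Filter Set Topology
open scoped ENNReal

lemma half_le_one_sub_exp_neg {t : ℝ} (h0 : 0 ≤ t) (h1 : t ≤ 1) : t / 2 ≤ 1 - exp (-t) := by
  have hinv : exp (-t) * exp t = 1 := by rw [← exp_add, neg_add_cancel, exp_zero]
  nlinarith [add_one_le_exp t, exp_pos (-t)]

lemma one_sub_exp_neg_pos {t : ℝ} (ht : 0 < t) : 0 < 1 - exp (-t) := by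
  linarith [exp_lt_one_iff.2 (neg_lt_zero.2 ht)]

lemma div_two_rpow_neg_le {t e : ℝ} (ht : 0 ≤ t) (he : e ≤ 1) :
    (t / 2) ^ (-e) ≤ 2 * t ^ (-e) := by
  rw [div_rpow ht zero_le_two, rpow_neg zero_le_two, div_inv_eq_mul, mul_comm]
  gcongr
  simpa using rpow_le_rpow_of_exponent_le one_le_two he

lemma rpow_neg_le_one_sub_exp_neg_rpow_neg {t e : ℝ} (ht : 0 < t) (he : 0 ≤ e) :
    t ^ (-e) ≤ (1 - exp (-t)) ^ (-e) :=
  rpow_le_rpow_of_nonpos (one_sub_exp_neg_pos ht) (by linarith [one_sub_le_exp_neg t])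
    (neg_nonpos.2 he)

lemma one_sub_exp_neg_rpow_neg_le {t e : ℝ} (ht : 0 < t) (ht1 : t ≤ 1) (he : 0 ≤ e)
    (he1 : e ≤ 1) : (1 - exp (-t)) ^ (-e) ≤ 2 * t ^ (-e) :=
  (rpow_le_rpow_of_nonpos (by linarith) (half_le_one_sub_exp_neg ht.le ht1)
    (neg_nonpos.2 he)).trans (div_two_rpow_neg_le ht.le he1)

lemma one_le_one_sub_exp_neg_rpow_neg {t e : ℝ} (ht : 0 < t) (he : 0 ≤ e) :
    1 ≤ (1 - exp (-t)) ^ (-e) :=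
  one_le_rpow_of_pos_of_le_one_of_nonpos (one_sub_exp_neg_pos ht)
    (by linarith [exp_pos (-t)]) (neg_nonpos.2 he)

lemma nonneg_ae_restrict_Ioo {a b : ℝ} {f : ℝ → ℝ} (hf : ∀ s ∈ Ioo a b, 0 ≤ f s) :
    0 ≤ᵐ[volume.restrict (Ioo a b)] f :=
  (ae_restrict_iff' measurableSet_Ioo).2 (.of_forall hf)

lemma setLIntegral_Ioo_sub_rpow_neg {a b β : ℝ} (hab : a < b) (hβ : β < 1) :
    ∫⁻ s in Ioo a b, ENNReal.ofReal ((s - a) ^ (-β)) =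
      ENNReal.ofReal ((b - a) ^ (1 - β) / (1 - β)) := by
  have hint : IntervalIntegrable (fun s => (s - a) ^ (-β)) volume a b := by
    simpa using (intervalIntegral.intervalIntegrable_rpow' (a := 0) (b := b - a)
      (by linarith : -1 < -β)).comp_sub_right a
  rw [← ofReal_integral_eq_lintegral_ofReal
      ((intervalIntegrable_iff_integrableOn_Ioo_of_le hab.le).1 hint)
      (nonneg_ae_restrict_Ioo fun s hs => rpow_nonneg (by linarith [hs.1]) _),
    ← integral_Ioc_eq_integral_Ioo, ← intervalIntegral.integral_of_le hab.le,
    intervalIntegral.integral_comp_sub_right (fun x => x ^ (-β)), sub_self,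
    integral_rpow (Or.inl (by linarith)), zero_rpow (by linarith), neg_add_eq_sub, sub_zero]

lemma setLIntegral_Ioo_rpow_neg_sub {a b β : ℝ} (hab : a < b) (hβ : β < 1) :
    ∫⁻ s in Ioo a b, ENNReal.ofReal ((b - s) ^ (-β)) =
      ENNReal.ofReal ((b - a) ^ (1 - β) / (1 - β)) := by
  have hint : IntervalIntegrable (fun s => (b - s) ^ (-β)) volume a b := by
    simpa using ((intervalIntegral.intervalIntegrable_rpow' (a := 0) (b := b - a)
      (by linarith : -1 < -β)).comp_sub_left b).symm
  rw [← ofReal_integral_eq_lintegral_ofReal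
      ((intervalIntegrable_iff_integrableOn_Ioo_of_le hab.le).1 hint)
      (nonneg_ae_restrict_Ioo fun s hs => rpow_nonneg (by linarith [hs.2]) _),
    ← integral_Ioc_eq_integral_Ioo, ← intervalIntegral.integral_of_le hab.le,
    intervalIntegral.integral_comp_sub_left (fun x => x ^ (-β)), sub_self,
    integral_rpow (Or.inl (by linarith)), zero_rpow (by linarith), neg_add_eq_sub, sub_zero]

lemma setLIntegral_rpow_neg_mul_rpow_neg_le {r τ α β : ℝ} (hrτ : r < τ) (hα0 : 0 ≤ α)
    (hα1 : α < 1) (hβ0 : 0 ≤ β) (hβ1 : β < 1) :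
    ∫⁻ s in Ioo r τ, ENNReal.ofReal ((τ - s) ^ (-α)) * ENNReal.ofReal ((s - r) ^ (-β)) ≤
      ENNReal.ofReal ((2 / (1 - α) + 2 / (1 - β)) * (τ - r) ^ (1 - α - β)) := by
  set T := τ - r
  have hT0 : 0 < T := sub_pos.2 hrτ
  -- each `s` is at distance at least `T / 2` from one of the two singularities
  have hsplit : ∀ s ∈ Ioo r τ,
      ENNReal.ofReal ((τ - s) ^ (-α)) * ENNReal.ofReal ((s - r) ^ (-β)) ≤
        ENNReal.ofReal ((T / 2) ^ (-α)) * ENNReal.ofReal ((s - r) ^ (-β)) +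
          ENNReal.ofReal ((T / 2) ^ (-β)) * ENNReal.ofReal ((τ - s) ^ (-α)) := by
    intro s hs
    rcases le_total (s - r) (T / 2) with h | h
    · refine le_add_right (mul_le_mul_left ?_ _)
      exact ENNReal.ofReal_le_ofReal
        (rpow_le_rpow_of_nonpos (by positivity) (by linarith) (neg_nonpos.2 hα0))
    · refine le_add_left ((mul_comm _ _).trans_le (mul_le_mul_left ?_ _))
      exact ENNReal.ofReal_le_ofReal
        (rpow_le_rpow_of_nonpos (by positivity) h (neg_nonpos.2 hβ0))
  have hhalf : ∀ {e e' : ℝ}, e ≤ 1 → e' < 1 →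
      (T / 2) ^ (-e) * (T ^ (1 - e') / (1 - e')) ≤ 2 / (1 - e') * T ^ (1 - e - e') := by
    intro e e' he he'
    rw [show 1 - e - e' = -e + (1 - e') by ring, rpow_add hT0]
    have h1 : 0 < 1 - e' := sub_pos.2 he'
    calc (T / 2) ^ (-e) * (T ^ (1 - e') / (1 - e'))
        ≤ 2 * T ^ (-e) * (T ^ (1 - e') / (1 - e')) := by
          gcongr; exact div_two_rpow_neg_le hT0.le he
      _ = _ := by ring
  calc _ ≤ ∫⁻ s in Ioo r τ, (ENNReal.ofReal ((T / 2) ^ (-α)) * ENNReal.ofReal ((s - r) ^ (-β)) +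
          ENNReal.ofReal ((T / 2) ^ (-β)) * ENNReal.ofReal ((τ - s) ^ (-α))) :=
        setLIntegral_mono' measurableSet_Ioo hsplit
    _ = ENNReal.ofReal ((T / 2) ^ (-α)) * ENNReal.ofReal (T ^ (1 - β) / (1 - β)) +
          ENNReal.ofReal ((T / 2) ^ (-β)) * ENNReal.ofReal (T ^ (1 - α) / (1 - α)) := by
        rw [lintegral_add_left (by fun_prop), lintegral_const_mul _ (by fun_prop),
          lintegral_const_mul _ (by fun_prop), setLIntegral_Ioo_sub_rpow_neg hrτ hβ1,
          setLIntegral_Ioo_rpow_neg_sub hrτ hα1]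
    _ ≤ _ := by
        rw [← ENNReal.ofReal_mul (by positivity), ← ENNReal.ofReal_mul (by positivity),
          ← ENNReal.ofReal_add (by positivity) (by positivity)]
        refine ENNReal.ofReal_le_ofReal ?_
        have := hhalf hα1.le hβ1
        have := hhalf hβ1.le hα1
        rw [sub_right_comm 1 β α] at this
        linarith

lemma setLIntegral_Ioo_setLIntegral_Ioo_swap {a b : ℝ} {F : ℝ → ℝ → ℝ≥0∞}
    (hF : AEMeasurable (Function.uncurry F)
      ((volume.restrict (Ioo a b)).prod (volume.restrict (Ioo a b)))) :
    ∫⁻ s in Ioo a b, ∫⁻ r in Ioo a s, F s r = ∫⁻ r in Ioo a b, ∫⁻ s in Ioo r b, F s r := by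
  set G : ℝ → ℝ → ℝ≥0∞ := fun s r => (Iio s).indicator (F s) r
  have hG : Function.uncurry G = {p : ℝ × ℝ | p.2 < p.1}.indicator (Function.uncurry F) := by
    ext ⟨s, r⟩; simp [G, indicator]
  calc ∫⁻ s in Ioo a b, ∫⁻ r in Ioo a s, F s r
      = ∫⁻ s in Ioo a b, ∫⁻ r in Ioo a b, G s r := by
        refine setLIntegral_congr_fun measurableSet_Ioo fun s hs => ?_
        rw [lintegral_indicator measurableSet_Iio, Measure.restrict_restrict measurableSet_Iio,
          Iio_inter_Ioo, min_eq_left hs.2.le]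
    _ = ∫⁻ r in Ioo a b, ∫⁻ s in Ioo a b, G s r := by
        refine lintegral_lintegral_swap ?_
        rw [hG]
        exact hF.indicator (measurableSet_lt measurable_snd measurable_fst)
    _ = _ := by
        refine setLIntegral_congr_fun measurableSet_Ioo fun r hr => ?_
        have hGr : (fun s => G s r) = (Ioi r).indicator (fun s => F s r) := by
          ext s; simp [G, indicator]
        rw [hGr, lintegral_indicator measurableSet_Ioi, Measure.restrict_restrict measurableSet_Ioi]
        congr 2
        ext s; simp only [mem_inter_iff, mem_Ioi, mem_Ioo]; grind

/-- Valued in `ℝ≥0∞`, so that exchanging the order of integration needs no integrability. -/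
noncomputable def abelIntegral (q a : ℝ) (g : ℝ → ℝ≥0∞) (t : ℝ) : ℝ≥0∞ :=
  ∫⁻ s in Ioo a t, ENNReal.ofReal ((t - s) ^ (-q)) * g s

lemma abelIntegral_abelIntegral_le {α β a t : ℝ} {g : ℝ → ℝ≥0∞} (hα0 : 0 ≤ α) (hα1 : α < 1)
    (hβ0 : 0 ≤ β) (hβ1 : β < 1) (hg : AEMeasurable g (volume.restrict (Ioo a t))) :
    abelIntegral α a (abelIntegral β a g) t ≤
      ENNReal.ofReal ((2 / (1 - α) + 2 / (1 - β)) * (t - a) ^ (1 - α)) *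
        abelIntegral β a g t := by
  set c := 2 / (1 - α) + 2 / (1 - β)
  have hc : 0 ≤ c := by have := sub_pos.2 hα1; have := sub_pos.2 hβ1; positivity
  have hkernel : ∀ r ∈ Ioo a t,
      (∫⁻ s in Ioo r t, ENNReal.ofReal ((t - s) ^ (-α)) * ENNReal.ofReal ((s - r) ^ (-β))) ≤
        ENNReal.ofReal (c * (t - a) ^ (1 - α)) * ENNReal.ofReal ((t - r) ^ (-β)) := by
    intro r hr
    have htr : 0 < t - r := sub_pos.2 hr.2
    refine (setLIntegral_rpow_neg_mul_rpow_neg_le hr.2 hα0 hα1 hβ0 hβ1).trans ?_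
    have hpow : (t - r) ^ (1 - α - β) = (t - r) ^ (1 - α) * (t - r) ^ (-β) := by
      rw [← rpow_add htr, sub_eq_add_neg (1 - α)]
    rw [← ENNReal.ofReal_mul (mul_nonneg hc (rpow_nonneg (by linarith [hr.1]) _)), hpow,
      ← mul_assoc]
    gcongr
    linarith [hr.1]
  calc abelIntegral α a (abelIntegral β a g) t
      = ∫⁻ s in Ioo a t, ∫⁻ r in Ioo a s,
          ENNReal.ofReal ((t - s) ^ (-α)) * (ENNReal.ofReal ((s - r) ^ (-β)) * g r) := by
        simp only [abelIntegral, lintegral_const_mul' _ _ ENNReal.ofReal_ne_top]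
    _ = ∫⁻ r in Ioo a t, ∫⁻ s in Ioo r t,
          ENNReal.ofReal ((t - s) ^ (-α)) * (ENNReal.ofReal ((s - r) ^ (-β)) * g r) :=
        setLIntegral_Ioo_setLIntegral_Ioo_swap <| (Measurable.aemeasurable (by fun_prop)).mul
          ((Measurable.aemeasurable (by fun_prop)).mul hg.comp_snd)
    _ = ∫⁻ r in Ioo a t, (∫⁻ s in Ioo r t,
          ENNReal.ofReal ((t - s) ^ (-α)) * ENNReal.ofReal ((s - r) ^ (-β))) * g r := by
        simp only [← mul_assoc]
        exact setLIntegral_congr_fun measurableSet_Ioo fun r _ =>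
          lintegral_mul_const _ (by fun_prop)
    _ ≤ ∫⁻ r in Ioo a t,
          ENNReal.ofReal (c * (t - a) ^ (1 - α)) * (ENNReal.ofReal ((t - r) ^ (-β)) * g r) :=
        setLIntegral_mono' measurableSet_Ioo fun r hr => by
          rw [← mul_assoc]; exact mul_le_mul_left (hkernel r hr) _
    _ = _ := lintegral_const_mul' _ _ ENNReal.ofReal_ne_top

lemma abelIntegral_le_two_mul_of_le_add {q a t c : ℝ} {g h : ℝ → ℝ≥0∞} (hq0 : 0 ≤ q)
    (hq1 : q < 1) (hat : a ≤ t) (hg : AEMeasurable g (volume.restrict (Ioo a t)))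
    (hh : AEMeasurable h (volume.restrict (Ioo a t)))
    (hle : ∀ s ∈ Ioo a t, g s ≤ h s + ENNReal.ofReal c * abelIntegral q a g s)
    (hsmall : c * (4 / (1 - q)) * (t - a) ^ (1 - q) ≤ 1 / 2)
    (hfin : abelIntegral q a g t ≠ ∞) :
    abelIntegral q a g t ≤ 2 * abelIntegral q a h t := by
  set L := abelIntegral q a g t
  have hiter : ENNReal.ofReal c * abelIntegral q a (abelIntegral q a g) t ≤ L / 2 := by
    have h4 := abelIntegral_abelIntegral_le hq0 hq1 hq0 hq1 hg
    rw [show 2 / (1 - q) + 2 / (1 - q) = 4 / (1 - q) by ring] at h4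
    calc _ ≤ ENNReal.ofReal c * (ENNReal.ofReal (4 / (1 - q) * (t - a) ^ (1 - q)) * L) := by
          gcongr
      _ ≤ ENNReal.ofReal (1 / 2) * L := by
          rw [← mul_assoc, ← ENNReal.ofReal_mul' (mul_nonneg
            (div_nonneg zero_le_four (sub_pos.2 hq1).le) (rpow_nonneg (sub_nonneg.2 hat) _))]
          gcongr
          linarith
      _ = L / 2 := by
          rw [ENNReal.div_eq_inv_mul, one_div, ENNReal.ofReal_inv_of_pos two_pos,
            ENNReal.ofReal_ofNat]
  have hL : L / 2 + L / 2 ≤ abelIntegral q a h t + L / 2 := by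
    rw [ENNReal.add_halves]
    calc L ≤ ∫⁻ s in Ioo a t, (ENNReal.ofReal ((t - s) ^ (-q)) * h s +
          ENNReal.ofReal c * (ENNReal.ofReal ((t - s) ^ (-q)) * abelIntegral q a g s)) :=
          setLIntegral_mono' measurableSet_Ioo fun s hs => by
            rw [mul_left_comm, ← mul_add]; gcongr; exact hle s hs
      _ = abelIntegral q a h t + ENNReal.ofReal c * abelIntegral q a (abelIntegral q a g) t := by
          rw [lintegral_add_left' (f := fun s => ENNReal.ofReal ((t - s) ^ (-q)) * h s)
              ((Measurable.aemeasurable (by fun_prop)).mul hh),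
            lintegral_const_mul' _ _ ENNReal.ofReal_ne_top]
          rfl
      _ ≤ _ := by gcongr
  have hhalf := ENNReal.le_of_add_le_add_right (ENNReal.div_ne_top hfin two_ne_zero) hL
  rwa [ENNReal.div_le_iff two_ne_zero ENNReal.ofNat_ne_top, mul_comm] at hhalf

lemma abelIntegral_le_ofReal_integral {q a t : ℝ} {f : ℝ → ℝ} (hq : 0 ≤ q)
    (hf : ∀ s ∈ Ioo a t, 0 ≤ f s)
    (hint : IntegrableOn (fun s => (1 - exp (-(t - s))) ^ (-q) * f s) (Ioo a t)) :
    abelIntegral q a (fun s => ENNReal.ofReal (f s)) t ≤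
      ENNReal.ofReal (∫ s in Ioo a t, (1 - exp (-(t - s))) ^ (-q) * f s) := by
  rw [ofReal_integral_eq_lintegral_ofReal hint (nonneg_ae_restrict_Ioo fun s hs =>
    mul_nonneg (rpow_nonneg (one_sub_exp_neg_pos (sub_pos.2 hs.2)).le _) (hf s hs))]
  refine setLIntegral_mono' measurableSet_Ioo fun s hs => ?_
  rw [← ENNReal.ofReal_mul (rpow_nonneg (sub_pos.2 hs.2).le _)]
  exact ENNReal.ofReal_le_ofReal (mul_le_mul_of_nonneg_right
    (rpow_neg_le_one_sub_exp_neg_rpow_neg (sub_pos.2 hs.2) hq) (hf s hs))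

lemma ofReal_integral_le_two_mul_abelIntegral {q a t : ℝ} {f : ℝ → ℝ} (hq0 : 0 ≤ q)
    (hq1 : q ≤ 1) (ht : t - a ≤ 1) (hf : ∀ s ∈ Ioo a t, 0 ≤ f s)
    (hint : IntegrableOn (fun s => (1 - exp (-(t - s))) ^ (-q) * f s) (Ioo a t)) :
    ENNReal.ofReal (∫ s in Ioo a t, (1 - exp (-(t - s))) ^ (-q) * f s) ≤
      2 * abelIntegral q a (fun s => ENNReal.ofReal (f s)) t := by
  rw [ofReal_integral_eq_lintegral_ofReal hint (nonneg_ae_restrict_Ioo fun s hs =>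
    mul_nonneg (rpow_nonneg (one_sub_exp_neg_pos (sub_pos.2 hs.2)).le _) (hf s hs)),
    abelIntegral, ← lintegral_const_mul' _ _ ENNReal.ofNat_ne_top]
  refine setLIntegral_mono' measurableSet_Ioo fun s hs => ?_
  have hts : 0 < t - s := sub_pos.2 hs.2
  rw [← ENNReal.ofReal_mul (rpow_nonneg hts.le _), ← ENNReal.ofReal_ofNat 2,
    ← ENNReal.ofReal_mul zero_le_two, ← mul_assoc]
  exact ENNReal.ofReal_le_ofReal (mul_le_mul_of_nonneg_right
    (one_sub_exp_neg_rpow_neg_le hts (by linarith [hs.1]) hq0 hq1) (hf s hs))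

lemma abelIntegral_rpow_add_const_le {q β a t B K : ℝ} (hq0 : 0 ≤ q) (hq1 : q < 1)
    (hβ0 : 0 ≤ β) (hβ1 : β < 1) (hat : a < t) (hB : 0 ≤ B) (hK : 0 ≤ K) :
    abelIntegral q a
        (fun s => ENNReal.ofReal B * ENNReal.ofReal ((s - a) ^ (-β)) + ENNReal.ofReal K) t ≤
      ENNReal.ofReal (B * ((2 / (1 - q) + 2 / (1 - β)) * (t - a) ^ (1 - q - β)) +
        K * ((t - a) ^ (1 - q) / (1 - q))) := by
  have hT : 0 ≤ t - a := (sub_pos.2 hat).le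
  have hq : 0 < 1 - q := sub_pos.2 hq1
  simp only [abelIntegral, mul_add, mul_left_comm _ (ENNReal.ofReal B)]
  rw [lintegral_add_left (by fun_prop), lintegral_const_mul' _ _ ENNReal.ofReal_ne_top,
    lintegral_mul_const _ (by fun_prop), setLIntegral_Ioo_rpow_neg_sub hat hq1,
    ENNReal.ofReal_add (by have := sub_pos.2 hβ1; positivity) (by positivity),
    ENNReal.ofReal_mul hB, mul_comm K,
    ENNReal.ofReal_mul (p := (t - a) ^ (1 - q) / (1 - q)) (by positivity)]
  gcongr
  exact setLIntegral_rpow_neg_mul_rpow_neg_le hat hq0 hq1 hβ0 hβ1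

structure IsVolterraSubsolution (q β C₁ C₂ K τ₀ τ : ℝ) (φ : ℝ → ℝ) : Prop where
  continuousOn : ContinuousOn φ (Ioc τ₀ τ)
  nonneg : ∀ σ ∈ Ioc τ₀ τ, 0 ≤ φ σ
  integrableOn : ∀ σ ∈ Ioc τ₀ τ,
    IntegrableOn (fun s => (1 - exp (-(σ - s))) ^ (-q) * (φ s + K)) (Ioo τ₀ σ)
  le : ∀ σ ∈ Ioc τ₀ τ, φ σ ≤ C₁ * (1 - exp (-(σ - τ₀))) ^ (-β) +
    C₂ * ∫ s in Ioo τ₀ σ, (1 - exp (-(σ - s))) ^ (-q) * (φ s + K)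

namespace IsVolterraSubsolution

variable {q β C₁ C₂ K τ₀ τ : ℝ} {φ : ℝ → ℝ}

lemma add_const_nonneg (hφ : IsVolterraSubsolution q β C₁ C₂ K τ₀ τ φ) (hK : 0 ≤ K) :
    ∀ σ ∈ Ioc τ₀ τ, ∀ s ∈ Ioo τ₀ σ, 0 ≤ φ s + K := fun _ hσ s hs =>
  add_nonneg (hφ.nonneg s ⟨hs.1, hs.2.le.trans hσ.2⟩) hK

lemma ofReal_integral_le_two_mul_abelIntegral (hφ : IsVolterraSubsolution q β C₁ C₂ K τ₀ τ φ)
    (hq0 : 0 ≤ q) (hq1 : q ≤ 1) (hK : 0 ≤ K) (hτ1 : τ - τ₀ ≤ 1) {σ : ℝ} (hσ : σ ∈ Ioc τ₀ τ) :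
    ENNReal.ofReal (∫ s in Ioo τ₀ σ, (1 - exp (-(σ - s))) ^ (-q) * (φ s + K)) ≤
      2 * abelIntegral q τ₀ (fun s => ENNReal.ofReal (φ s + K)) σ :=
  _root_.ofReal_integral_le_two_mul_abelIntegral hq0 hq1 (by linarith [hσ.2])
    (hφ.add_const_nonneg hK σ hσ) (hφ.integrableOn σ hσ)

lemma abelIntegral_le (hφ : IsVolterraSubsolution q β C₁ C₂ K τ₀ τ φ) (hq0 : 0 ≤ q)
    (hq1 : q < 1) (hβ0 : 0 ≤ β) (hβ1 : β ≤ 1) (hC₁ : 0 ≤ C₁) (hC₂ : 0 ≤ C₂) (hK : 0 ≤ K)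
    (hτ : τ₀ < τ) (hτ1 : τ - τ₀ ≤ 1) (hsmall : 8 * C₂ / (1 - q) * (τ - τ₀) ^ (1 - q) ≤ 1 / 2) :
    abelIntegral q τ₀ (fun s => ENNReal.ofReal (φ s + K)) τ ≤
      2 * abelIntegral q τ₀ (fun s =>
        ENNReal.ofReal (2 * C₁) * ENNReal.ofReal ((s - τ₀) ^ (-β)) + ENNReal.ofReal K) τ := by
  set L := abelIntegral q τ₀ (fun s => ENNReal.ofReal (φ s + K))
  have hgh : ∀ s ∈ Ioo τ₀ τ, ENNReal.ofReal (φ s + K) ≤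
      (ENNReal.ofReal (2 * C₁) * ENNReal.ofReal ((s - τ₀) ^ (-β)) + ENNReal.ofReal K) +
        ENNReal.ofReal (2 * C₂) * L s := by
    intro s hs
    have hs' : s ∈ Ioc τ₀ τ := Ioo_subset_Ioc_self hs
    have hsτ₀ : 0 < s - τ₀ := sub_pos.2 hs.1
    have hkernel := one_sub_exp_neg_rpow_neg_le hsτ₀ (by linarith [hs.2]) hβ0 hβ1
    have hφs : φ s + K ≤ (2 * C₁ * (s - τ₀) ^ (-β) + K) +
        C₂ * ∫ x in Ioo τ₀ s, (1 - exp (-(s - x))) ^ (-q) * (φ x + K) := by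
      nlinarith [hφ.le s hs']
    refine (ENNReal.ofReal_le_ofReal hφs).trans (ENNReal.ofReal_add_le.trans ?_)
    rw [ENNReal.ofReal_add (by positivity) hK, ENNReal.ofReal_mul (by positivity)]
    refine add_le_add le_rfl ?_
    calc ENNReal.ofReal (C₂ * ∫ x in Ioo τ₀ s, (1 - exp (-(s - x))) ^ (-q) * (φ x + K))
        ≤ ENNReal.ofReal C₂ * (2 * L s) := by
          rw [ENNReal.ofReal_mul hC₂]
          gcongr
          exact hφ.ofReal_integral_le_two_mul_abelIntegral hq0 hq1.le hK hτ1 hs'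
      _ = ENNReal.ofReal (2 * C₂) * L s := by
          rw [ENNReal.ofReal_mul zero_le_two, ENNReal.ofReal_ofNat]; ring
  have hτ' := right_mem_Ioc.2 hτ
  refine abelIntegral_le_two_mul_of_le_add hq0 hq1 hτ.le
    (((hφ.continuousOn.mono Ioo_subset_Ioc_self).aemeasurable
      measurableSet_Ioo).add_const K).ennreal_ofReal
    (by fun_prop) hgh (le_of_eq_of_le (by ring) hsmall) ?_
  exact ne_top_of_le_ne_top ENNReal.ofReal_ne_top (abelIntegral_le_ofReal_integral hq0
    (hφ.add_const_nonneg hK τ hτ') (hφ.integrableOn τ hτ'))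

lemma integral_le (hφ : IsVolterraSubsolution q β C₁ C₂ K τ₀ τ φ) (hq0 : 0 ≤ q)
    (hq1 : q < 1) (hβ0 : 0 ≤ β) (hβ1 : β < 1) (hC₁ : 0 ≤ C₁) (hC₂ : 0 ≤ C₂) (hK : 0 ≤ K)
    (hτ : τ₀ < τ) (hτ1 : τ - τ₀ ≤ 1) (hsmall : 8 * C₂ / (1 - q) * (τ - τ₀) ^ (1 - q) ≤ 1 / 2) :
    ∫ s in Ioo τ₀ τ, (1 - exp (-(τ - s))) ^ (-q) * (φ s + K) ≤
      4 * (2 * C₁ * ((2 / (1 - q) + 2 / (1 - β)) * (τ - τ₀) ^ (1 - q - β)) +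
        K * ((τ - τ₀) ^ (1 - q) / (1 - q))) := by
  have hX : 0 ≤ 2 * C₁ * ((2 / (1 - q) + 2 / (1 - β)) * (τ - τ₀) ^ (1 - q - β)) +
      K * ((τ - τ₀) ^ (1 - q) / (1 - q)) := by
    have := sub_pos.2 hq1; have := sub_pos.2 hβ1; have := sub_pos.2 hτ; positivity
  refine (ENNReal.ofReal_le_ofReal_iff (by positivity)).1 ?_
  calc _ ≤ 2 * abelIntegral q τ₀ (fun s => ENNReal.ofReal (φ s + K)) τ :=
        hφ.ofReal_integral_le_two_mul_abelIntegral hq0 hq1.le hK hτ1 (right_mem_Ioc.2 hτ)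
    _ ≤ 2 * (2 * ENNReal.ofReal (2 * C₁ * ((2 / (1 - q) + 2 / (1 - β)) *
          (τ - τ₀) ^ (1 - q - β)) + K * ((τ - τ₀) ^ (1 - q) / (1 - q)))) := by
        gcongr
        refine (hφ.abelIntegral_le hq0 hq1 hβ0 hβ1.le hC₁ hC₂ hK hτ hτ1 hsmall).trans ?_
        gcongr
        exact abelIntegral_rpow_add_const_le hq0 hq1 hβ0 hβ1 hτ (by positivity) hK
    _ = _ := by
        rw [ENNReal.ofReal_mul zero_le_four, ENNReal.ofReal_ofNat, ← mul_assoc]; norm_num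

lemma le_two_mul (hφ : IsVolterraSubsolution q β C₁ C₂ K τ₀ τ φ) (hq0 : 0 ≤ q)
    (hq1 : q < 1) (hβ0 : 0 ≤ β) (hβ1 : β < 1) (hC₁ : 0 ≤ C₁) (hC₂ : 0 ≤ C₂) (hK : 0 ≤ K)
    (hτ : τ₀ < τ) (hτ1 : τ - τ₀ ≤ 1)
    (hsmall : (8 * C₂ * (2 / (1 - q) + 2 / (1 - β)) + 2 * C₂ * K / (1 - q)) *
      (τ - τ₀) ^ (1 - q) ≤ 1) :
    φ τ ≤ 2 * (C₁ + 1) * (1 - exp (-(τ - τ₀))) ^ (-β) := by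
  set c := 2 / (1 - q) + 2 / (1 - β)
  set T := τ - τ₀
  set ε := T ^ (1 - q)
  set A := (1 - exp (-T)) ^ (-β)
  have hT : 0 < T := sub_pos.2 hτ
  have h1q := sub_pos.2 hq1
  have h1β := sub_pos.2 hβ1
  have hε : 0 ≤ ε := rpow_nonneg hT.le _
  have hc : 2 / (1 - q) ≤ c := le_add_of_nonneg_right (by positivity)
  have hsource : 8 * C₂ * c * ε ≤ 1 := by
    have : 0 ≤ 2 * C₂ * K / (1 - q) * ε := by positivity
    linarith
  have hconst : 2 * C₂ * K / (1 - q) * ε ≤ 1 := by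
    have : 0 ≤ 8 * C₂ * c * ε := by positivity
    linarith
  have habsorb : 8 * C₂ / (1 - q) * ε ≤ 1 / 2 := by
    have : 8 * C₂ * (2 / (1 - q)) * ε ≤ 8 * C₂ * c * ε := by gcongr
    linarith [show 8 * C₂ / (1 - q) * ε = 8 * C₂ * (2 / (1 - q)) * ε / 2 by ring]
  have hI := hφ.integral_le hq0 hq1 hβ0 hβ1 hC₁ hC₂ hK hτ hτ1 habsorb
  rw [show 1 - q - β = (1 - q) + -β by ring, rpow_add hT] at hI
  have hA1 : 1 ≤ A := one_le_one_sub_exp_neg_rpow_neg hT hβ0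
  have hTA : T ^ (-β) ≤ A := rpow_neg_le_one_sub_exp_neg_rpow_neg hT hβ0
  calc φ τ ≤ C₁ * A + C₂ * ∫ s in Ioo τ₀ τ, (1 - exp (-(τ - s))) ^ (-q) * (φ s + K) :=
        hφ.le τ (right_mem_Ioc.2 hτ)
    _ ≤ C₁ * A + C₂ * (4 * (2 * C₁ * (c * (ε * T ^ (-β))) + K * (ε / (1 - q)))) := by gcongr
    _ = C₁ * A + C₁ * (8 * C₂ * c * ε) * T ^ (-β) + 2 * (2 * C₂ * K / (1 - q) * ε) := by ring
    _ ≤ C₁ * A + C₁ * 1 * A + 2 * (1 * A) := by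
        have : C₁ * (8 * C₂ * c * ε) * T ^ (-β) ≤ C₁ * 1 * A := by gcongr
        linarith
    _ = 2 * (C₁ + 1) * A := by ring

end IsVolterraSubsolution

lemma exists_forall_Ioo_le_one_and_mul_rpow_le_one (M : ℝ) {e : ℝ} (he : 0 < e) :
    ∃ T > 0, ∀ t ∈ Ioo 0 T, t ≤ 1 ∧ M * t ^ e ≤ 1 := by
  have hlim : Tendsto (fun t : ℝ => M * t ^ e) (𝓝[>] 0) (𝓝 0) := by
    have := ((continuousAt_rpow_const 0 e (Or.inr he.le)).const_mul M).tendsto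
    rw [zero_rpow he.ne', mul_zero] at this
    exact this.mono_left nhdsWithin_le_nhds
  exact (nhdsGT_basis 0).eventually_iff.1 <|
    ((eventually_le_nhds one_pos).filter_mono nhdsWithin_le_nhds).and
      (hlim.eventually_le_const one_pos)

theorem gronwall_singular_absorption_general
    (p C₂ K : ℝ) (hp1 : 1 < p) (hC₂ : 0 ≤ C₂) (hK : 0 ≤ K) :
    ∃ Tb : ℝ, 0 < Tb ∧ ∀ C₁ : ℝ, 0 ≤ C₁ → ∀ (τ₀ : ℝ) (φ : ℝ → ℝ),
      ContinuousOn φ (Set.Ioo τ₀ (τ₀ + Tb)) →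
      (∀ τ ∈ Set.Ioo τ₀ (τ₀ + Tb), 0 ≤ φ τ) →
      (∀ τ ∈ Set.Ioo τ₀ (τ₀ + Tb),
        IntegrableOn
          (fun s => (1 - Real.exp (-(τ - s))) ^ (-(1 : ℝ) / p) * (φ s + K))
          (Set.Ioo τ₀ τ)) →
      (∀ τ ∈ Set.Ioo τ₀ (τ₀ + Tb),
        φ τ ≤ C₁ * (1 - Real.exp (-(τ - τ₀))) ^ (-(1 : ℝ) / 2) +
          C₂ * ∫ s in Set.Ioo τ₀ τ,
            (1 - Real.exp (-(τ - s))) ^ (-(1 : ℝ) / p) * (φ s + K)) →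
      ∀ τ ∈ Set.Ioo τ₀ (τ₀ + Tb),
        φ τ ≤ 2 * (C₁ + 1) * (1 - Real.exp (-(τ - τ₀))) ^ (-(1 : ℝ) / 2) := by
  set q := 1 / p with hq
  have hq0 : 0 < q := by positivity
  have hq1 : q < 1 := (div_lt_one (by linarith)).2 hp1
  obtain ⟨Tb, hTb, hsmall⟩ := exists_forall_Ioo_le_one_and_mul_rpow_le_one
    (8 * C₂ * (2 / (1 - q) + 2 / (1 - 1 / 2)) + 2 * C₂ * K / (1 - q)) (sub_pos.2 hq1)
  refine ⟨Tb, hTb, fun C₁ hC₁ τ₀ φ hcont hpos hint hineq τ hτ => ?_⟩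
  simp only [neg_div, ← hq] at hint hineq ⊢
  have hJ : Ioc τ₀ τ ⊆ Ioo τ₀ (τ₀ + Tb) := Ioc_subset_Ioo_right hτ.2
  have hφ : IsVolterraSubsolution q (1 / 2) C₁ C₂ K τ₀ τ φ :=
    ⟨hcont.mono hJ, fun σ hσ => hpos σ (hJ hσ), fun σ hσ => hint σ (hJ hσ),
      fun σ hσ => hineq σ (hJ hσ)⟩
  obtain ⟨hT1, hTsmall⟩ := hsmall (τ - τ₀) ⟨sub_pos.2 hτ.1, by linarith [hτ.2]⟩
  exact hφ.le_two_mul hq0.le hq1 (by norm_num) (by norm_num) hC₁ hC₂ hK hτ.1 hT1 hTsmall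

/-- Grönwall-type absorption lemma with singular kernel `a(τ)^{-1/p}`,
`a(τ) = 1 - e^{-τ}`: if `φ ≥ 0` satisfies
`φ(τ) ≤ C₁ a(τ-τ₀)^{-1/2} + C₂ ∫_{τ₀}^τ a(τ-s)^{-1/p} (φ(s)+K) ds`, then there
is `T̄ > 0`, depending only on `C₂, K, p`, such that
`φ(τ) ≤ 2(C₁+1) a(τ-τ₀)^{-1/2}` on `(τ₀, τ₀+T̄)`. -/
theorem gronwall_singular_absorption (m : ℝ) (hm : 1 < m)
    (p C₂ K : ℝ) (hp1 : 1 < p) (hp2 : p < 2) (hC₂ : 0 ≤ C₂) (hK : 0 ≤ K) :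
    ∃ Tb : ℝ, 0 < Tb ∧ ∀ C₁ : ℝ, 0 ≤ C₁ → ∀ (τ₀ : ℝ) (φ : ℝ → ℝ),
      ContinuousOn φ (Set.Ioo τ₀ (τ₀ + Tb)) →
      (∀ τ ∈ Set.Ioo τ₀ (τ₀ + Tb), 0 ≤ φ τ) →
      (∀ τ ∈ Set.Ioo τ₀ (τ₀ + Tb),
        IntegrableOn
          (fun s => (1 - Real.exp (-(τ - s))) ^ (-(1 : ℝ) / p) * (φ s + K))
          (Set.Ioo τ₀ τ)) →
      (∀ τ ∈ Set.Ioo τ₀ (τ₀ + Tb),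
        φ τ ≤ C₁ * (1 - Real.exp (-(τ - τ₀))) ^ (-(1 : ℝ) / 2) +
          C₂ * ∫ s in Set.Ioo τ₀ τ,
            (1 - Real.exp (-(τ - s))) ^ (-(1 : ℝ) / p) * (φ s + K)) →
      ∀ τ ∈ Set.Ioo τ₀ (τ₀ + Tb),
        φ τ ≤ 2 * (C₁ + 1) * (1 - Real.exp (-(τ - τ₀))) ^ (-(1 : ℝ) / 2) :=
  gronwall_singular_absorption_general p C₂ K hp1 hC₂ hK
end
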